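/- arXiv:math/9812161 — 8 statements merged into one kernel-verified Lean document; each statement's English description precedes it below -/
import Mathlib

section
/- Let τ ∈ ℂ with Im τ > 0, let ℓ be a positive integer, let η ∈ ℂ satisfy θ1(2mη) ≠ 0 for all integers m with 1 ≤ m ≤ ℓ, and let E ∈ ℂ. If Ψ : ℂ → ℂ is an entire function satisfying θ1(2x−2ℓη)·Ψ(x+η) + θ1(2x+2ℓη)·Ψ(x−η) = E·θ1(2x)·Ψ(x) for all x ∈ ℂ, then Ψ(jη) = Ψ(−jη) for every integer j with 1 ≤ j ≤ ℓ. -/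
open Complex Finset

/-- Jacobi theta function θ₁(x|τ). -/
noncomputable def theta1 (τ x : ℂ) : ℂ :=
  ∑' k : ℤ, Complex.exp ((Real.pi : ℂ) * Complex.I * τ * ((k : ℂ) + 1/2)^2 +
    2 * (Real.pi : ℂ) * Complex.I * (x + 1/2) * ((k : ℂ) + 1/2))

/-- Elliptic number [n] = θ₁(2nη). -/
noncomputable def en (τ η : ℂ) (n : ℤ) : ℂ := theta1 τ (2 * (n : ℂ) * η)

/-- Elliptic factorial [n]! = ∏_{j=1}^n [j]. -/
noncomputable def efact (τ η : ℂ) (n : ℕ) : ℂ := ∏ j ∈ Finset.range n, en τ η ((j : ℤ) + 1)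

/-- Elliptic binomial coefficient [n over m]. -/
noncomputable def ebinom (τ η : ℂ) (n m : ℕ) : ℂ :=
  efact τ η n / (efact τ η m * efact τ η (n - m))

/-- Φ(x,ζ) = θ₁(ζ+x)/(θ₁(x)θ₁(ζ)). -/
noncomputable def Phi (τ x ζ : ℂ) : ℂ := theta1 τ (ζ + x) / (theta1 τ x * theta1 τ ζ)

/-- The polynomials A_{(ℓ−s)η}(E), indexed by s = 0, 1, …, ℓ;
`Apoly τ η ℓ E s = A_{(ℓ−s)η}(E)`. -/
noncomputable def Apoly (τ η : ℂ) (ℓ : ℕ) (E : ℂ) : ℕ → ℂ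
  | 0 => 1
  | 1 => en τ η (ℓ : ℤ) / en τ η (2 * (ℓ : ℤ)) * E
  | (s + 2) =>
      en τ η ((ℓ : ℤ) - (s + 1)) / en τ η (2 * (ℓ : ℤ) - (s + 1)) * E *
        Apoly τ η ℓ E (s + 1)
      + en τ η ((s : ℤ) + 1) / en τ η (2 * (ℓ : ℤ) - (s + 1)) * Apoly τ η ℓ E s

/-- The coefficient A_k(x,λ) of the commuting difference operator A_λ. -/
noncomputable def Acoef (τ η : ℂ) (ℓ : ℕ) (k : ℕ) (x lam : ℂ) : ℂ :=
  (-1 : ℂ)^k * (efact τ η ℓ / efact τ η (2*ℓ)) * ebinom τ η ℓ k *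
  (∏ j ∈ Finset.range (ℓ - k),
     theta1 τ (2*x + 2*((ℓ : ℂ) - (j : ℂ))*η) * theta1 τ (2*lam + 2*((ℓ : ℂ) - (j : ℂ))*η) /
       theta1 τ (2*x + 2*lam + 2*((k : ℂ) - (j : ℂ))*η)) *
  (∏ j ∈ Finset.range k,
     theta1 τ (2*x - 2*((ℓ : ℂ) - (j : ℂ))*η) * theta1 τ (2*lam - 2*((ℓ : ℂ) - (j : ℂ))*η) /
       theta1 τ (2*x + 2*lam + 2*((k : ℂ) + (j : ℂ) - (ℓ : ℂ))*η))

/-- The difference operator A_λ acting on functions: (A_λ f)(x) = Σ_k A_k(x,λ) f(x+(2k−ℓ)η+λ). -/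
noncomputable def Aop (τ η : ℂ) (ℓ : ℕ) (lam : ℂ) (f : ℂ → ℂ) (x : ℂ) : ℂ :=
  ∑ k ∈ Finset.range (ℓ + 1), Acoef τ η ℓ k x lam * f (x + (2*(k : ℂ) - (ℓ : ℂ))*η + lam)

/-- All theta-denominators occurring in the coefficients A_k(x,λ) are nonzero. -/
def domAcoef (τ η : ℂ) (ℓ : ℕ) (x lam : ℂ) : Prop :=
  ∀ k ∈ Finset.range (ℓ + 1),
    (∀ j ∈ Finset.range (ℓ - k), theta1 τ (2*x + 2*lam + 2*((k : ℂ) - (j : ℂ))*η) ≠ 0) ∧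
    (∀ j ∈ Finset.range k, theta1 τ (2*x + 2*lam + 2*((k : ℂ) + (j : ℂ) - (ℓ : ℂ))*η) ≠ 0)

/-- The space Θ⁺_{4ℓ} of even theta functions of order 4ℓ. -/
def ThetaPlus (τ : ℂ) (ℓ : ℕ) (F : ℂ → ℂ) : Prop :=
  Differentiable ℂ F ∧
  (∀ x, F (x + 1) = F x) ∧
  (∀ x, F (x + τ) = Complex.exp (-4*(Real.pi : ℂ)*Complex.I*(ℓ : ℂ)*τ
      - 8*(Real.pi : ℂ)*Complex.I*(ℓ : ℂ)*x) * F x) ∧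
  (∀ x, F (-x) = F x)

/-!
Since θ₁ is odd, `x ↦ Ψ (-x)` solves the same difference equation as `Ψ`, hence so does the odd
part `D x = Ψ x - Ψ (-x)`. An odd solution vanishes at `0`, and the equation at `x = 0` reads
`-2 θ₁(2ℓη) D(η) = 0`, so it vanishes at `η`. The equation at `x = kη` then gives
`θ₁(2(k-ℓ)η) D((k+1)η) = 0` once `D(kη) = D((k-1)η) = 0`, and `θ₁(2(k-ℓ)η) ≠ 0` for `0 < k < ℓ`.
-/

open Real in
lemma theta1_odd (τ : ℂ) : (theta1 τ).Odd := by
  intro x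
  rw [theta1, theta1, ← tsum_neg, ← (Equiv.subLeft (-1 : ℤ)).tsum_eq]
  refine tsum_congr fun k => ?_
  have hexp : (π : ℂ) * I * τ * ((((-1 - k : ℤ) : ℂ)) + 1/2) ^ 2 +
        2 * π * I * (-x + 1/2) * ((((-1 - k : ℤ) : ℂ)) + 1/2)
      = ((π : ℂ) * I * τ * ((k : ℂ) + 1/2) ^ 2 + 2 * π * I * (x + 1/2) * ((k : ℂ) + 1/2))
        + ((-k - 1 : ℤ) : ℂ) * (2 * π * I) + π * I := by
    push_cast; ring
  rw [Equiv.subLeft_apply, hexp, Complex.exp_add, Complex.exp_add, exp_int_mul_two_pi_mul_I,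
    exp_pi_mul_I]
  ring

/-- The entire-function form of the difference Lamé equation `LΨ = EΨ`. -/
def IsDiffLameSolution (τ η : ℂ) (ℓ : ℕ) (E : ℂ) (Ψ : ℂ → ℂ) : Prop :=
  ∀ x : ℂ,
    theta1 τ (2*x - 2*(ℓ : ℂ)*η) * Ψ (x + η) + theta1 τ (2*x + 2*(ℓ : ℂ)*η) * Ψ (x - η)
      = E * theta1 τ (2*x) * Ψ x

namespace IsDiffLameSolution

variable {τ η E : ℂ} {ℓ : ℕ} {Ψ Φ : ℂ → ℂ}

lemma comp_neg (h : IsDiffLameSolution τ η ℓ E Ψ) :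
    IsDiffLameSolution τ η ℓ E (fun x => Ψ (-x)) := by
  intro x
  have h' := h (-x)
  rw [show 2*(-x) - 2*(ℓ : ℂ)*η = -(2*x + 2*ℓ*η) by ring,
    show 2*(-x) + 2*(ℓ : ℂ)*η = -(2*x - 2*ℓ*η) by ring, show 2*(-x) = -(2*x) by ring,
    theta1_odd, theta1_odd, theta1_odd, show -x + η = -(x - η) by ring,
    show -x - η = -(x + η) by ring] at h'
  linear_combination -h'

lemma sub (hΨ : IsDiffLameSolution τ η ℓ E Ψ) (hΦ : IsDiffLameSolution τ η ℓ E Φ) :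
    IsDiffLameSolution τ η ℓ E (Ψ - Φ) := by
  intro x
  simp only [Pi.sub_apply]
  linear_combination hΨ x - hΦ x

lemma apply_add_eq_zero (h : IsDiffLameSolution τ η ℓ E Ψ) {x : ℂ}
    (hθ : theta1 τ (2*x - 2*(ℓ : ℂ)*η) ≠ 0) (hprev : Ψ (x - η) = 0) (hx : Ψ x = 0) :
    Ψ (x + η) = 0 := by
  have h' := h x
  rw [hprev, hx, mul_zero, mul_zero, add_zero] at h'
  exact (mul_eq_zero.mp h').resolve_left hθ

lemma apply_step_eq_zero_of_odd (h : IsDiffLameSolution τ η ℓ E Ψ) (hodd : Ψ.Odd)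
    (hθ : theta1 τ (2*(ℓ : ℂ)*η) ≠ 0) : Ψ η = 0 := by
  have h' := h 0
  rw [mul_zero, (theta1_odd τ).map_zero, zero_sub, zero_add, zero_add, zero_sub, theta1_odd,
    hodd] at h'
  have h2 : theta1 τ (2*(ℓ : ℂ)*η) * Ψ η = 0 := by linear_combination (-1/2 : ℂ) * h'
  exact (mul_eq_zero.mp h2).resolve_left hθ

lemma apply_nat_mul_eq_zero_of_odd (h : IsDiffLameSolution τ η ℓ E Ψ) (hodd : Ψ.Odd)
    (hη : ∀ m : ℕ, 1 ≤ m → m ≤ ℓ → theta1 τ (2 * (m : ℂ) * η) ≠ 0) :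
    ∀ j : ℕ, j ≤ ℓ → Ψ (j * η) = 0 := by
  suffices hpair : ∀ k : ℕ, k + 1 ≤ ℓ → Ψ (k * η) = 0 ∧ Ψ ((k + 1 : ℕ) * η) = 0 by
    intro j hj
    rcases j with _ | k
    · simpa using hodd.map_zero
    · exact (hpair k hj).2
  intro k
  induction k with
  | zero =>
    intro hℓ
    simpa [hodd.map_zero] using h.apply_step_eq_zero_of_odd hodd (hη ℓ hℓ le_rfl)
  | succ k ih =>
    intro hk
    obtain ⟨hk0, hk1⟩ := ih (by omega)
    obtain ⟨n, rfl⟩ : ∃ n, ℓ = k + 1 + n := ⟨ℓ - (k + 1), by omega⟩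
    refine ⟨hk1, ?_⟩
    have hθ : theta1 τ (2 * ((k + 1 : ℕ) * η) - 2 * ((k + 1 + n : ℕ) : ℂ) * η) ≠ 0 := by
      rw [show 2 * ((k + 1 : ℕ) * η) - 2 * ((k + 1 + n : ℕ) : ℂ) * η = -(2 * (n : ℂ) * η) by
        push_cast; ring, theta1_odd, neg_ne_zero]
      exact hη n (by omega) (by omega)
    have hprev : Ψ ((k + 1 : ℕ) * η - η) = 0 := by
      convert hk0 using 2; push_cast; ring
    convert h.apply_add_eq_zero hθ hprev hk1 using 2
    push_cast; ring

end IsDiffLameSolution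

theorem diff_lame_entire_symmetry_general
    (τ : ℂ) (ℓ : ℕ) (η E : ℂ)
    (hη : ∀ m : ℕ, 1 ≤ m → m ≤ ℓ → theta1 τ (2 * (m : ℂ) * η) ≠ 0)
    (Ψ : ℂ → ℂ)
    (heq : ∀ x : ℂ,
      theta1 τ (2*x - 2*(ℓ : ℂ)*η) * Ψ (x + η) + theta1 τ (2*x + 2*(ℓ : ℂ)*η) * Ψ (x - η)
        = E * theta1 τ (2*x) * Ψ x) :
    ∀ j : ℕ, 1 ≤ j → j ≤ ℓ → Ψ ((j : ℂ) * η) = Ψ (-((j : ℂ) * η)) := by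
  intro j _ hj
  have hsol : IsDiffLameSolution τ η ℓ E Ψ := heq
  have hodd : (Ψ - fun x => Ψ (-x)).Odd := fun x => by simp
  exact sub_eq_zero.mp
    ((hsol.sub hsol.comp_neg).apply_nat_mul_eq_zero_of_odd hodd hη j hj)

/-- Lemma 3.1: any entire solution Ψ of the difference Lamé equation
satisfies Ψ(jη) = Ψ(−jη) for 1 ≤ j ≤ ℓ. -/
theorem diff_lame_entire_symmetry
    (τ : ℂ) (hτ : 0 < τ.im) (ℓ : ℕ) (hℓ : 0 < ℓ) (η E : ℂ)
    (hη : ∀ m : ℕ, 1 ≤ m → m ≤ ℓ → theta1 τ (2 * (m : ℂ) * η) ≠ 0)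
    (Ψ : ℂ → ℂ) (hent : Differentiable ℂ Ψ)
    (heq : ∀ x : ℂ,
      theta1 τ (2*x - 2*(ℓ : ℂ)*η) * Ψ (x + η) + theta1 τ (2*x + 2*(ℓ : ℂ)*η) * Ψ (x - η)
        = E * theta1 τ (2*x) * Ψ x) :
    ∀ j : ℕ, 1 ≤ j → j ≤ ℓ → Ψ ((j : ℂ) * η) = Ψ (-((j : ℂ) * η)) :=
  diff_lame_entire_symmetry_general τ ℓ η E hη Ψ heq
end

section
/- Let ℓ be a positive integer, N = ℓ(ℓ+1)/2, τ ∈ ℂ with Im τ > 0, and η ∈ ℂ with θ1(2nη) ≠ 0 for all integers 1 ≤ n ≤ 2ℓ. Then the coefficients C_j^{(ℓ)} satisfy the symmetry C_j^{(ℓ)} = C_{N−j}^{(ℓ)} for all 0 ≤ j ≤ N. -/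
open Complex Finset

/-- The coefficient C_j^{(ℓ)}(η) of the spectral curve equation (Proposition 3.1). -/
noncomputable def Ccoef (τ η : ℂ) (ℓ j : ℕ) : ℂ :=
  ∑ J ∈ (Finset.Icc 1 ℓ).powerset.filter (fun J => J.sum id = j),
    (-1 : ℂ)^(J.card * ℓ + J.card * (J.card - 1) / 2 + j) *
    ∏ k ∈ J, ∏ k' ∈ Finset.Icc 1 ℓ \ J,
      en τ η ((k : ℤ) + (k' : ℤ)) / en τ η ((k : ℤ) - (k' : ℤ))

/-
The summation set of `C_j` is carried onto that of `C_{N-j}` by `J ↦ {1,…,ℓ} \ J`, since the elements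
of `{1,…,ℓ}` add up to `N`. Under this involution the double product over `J × Jᶜ` becomes the one
over `Jᶜ × J`; as `θ₁` is odd, each of its `|J| |Jᶜ|` factors `[k + k'] / [k - k']` only changes
sign, and this sign exactly accounts for the change of the prefactor `(-1)^(κ(J) + j)`.
-/

lemma theta1_neg (τ x : ℂ) : theta1 τ (-x) = -theta1 τ x := by
  -- the summand at `k` for `-x` is minus the summand at `-1 - k` for `x`
  have summand_neg : ∀ k : ℤ,
      Complex.exp ((Real.pi : ℂ) * Complex.I * τ * ((k : ℂ) + 1/2)^2 +
        2 * (Real.pi : ℂ) * Complex.I * (-x + 1/2) * ((k : ℂ) + 1/2))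
      = -Complex.exp ((Real.pi : ℂ) * Complex.I * τ * (((-1 - k : ℤ) : ℂ) + 1/2)^2 +
        2 * (Real.pi : ℂ) * Complex.I * (x + 1/2) * (((-1 - k : ℤ) : ℂ) + 1/2)) := by
    intro k
    have hexp : (Real.pi : ℂ) * Complex.I * τ * ((k : ℂ) + 1/2)^2 +
        2 * (Real.pi : ℂ) * Complex.I * (-x + 1/2) * ((k : ℂ) + 1/2)
      = ((Real.pi : ℂ) * Complex.I * τ * (((-1 - k : ℤ) : ℂ) + 1/2)^2 +
        2 * (Real.pi : ℂ) * Complex.I * (x + 1/2) * (((-1 - k : ℤ) : ℂ) + 1/2))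
        + ((k : ℂ) * (2 * (Real.pi : ℂ) * Complex.I) + (Real.pi : ℂ) * Complex.I) := by
      push_cast; ring
    rw [hexp, Complex.exp_add, Complex.exp_add, Complex.exp_add,
      Complex.exp_int_mul_two_pi_mul_I, Complex.exp_pi_mul_I]
    ring
  rw [theta1, theta1, ← tsum_neg,
    ← Equiv.tsum_eq (Equiv.subLeft (-1 : ℤ))
      (fun k : ℤ => -Complex.exp ((Real.pi : ℂ) * Complex.I * τ * ((k : ℂ) + 1/2)^2 +
        2 * (Real.pi : ℂ) * Complex.I * (x + 1/2) * ((k : ℂ) + 1/2)))]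
  exact tsum_congr fun k => by simpa [Equiv.subLeft, sub_eq_add_neg] using summand_neg k

lemma en_neg (τ η : ℂ) (n : ℤ) : en τ η (-n) = -en τ η n := by
  rw [en, en, show (2 : ℂ) * ((-n : ℤ) : ℂ) * η = -(2 * (n : ℂ) * η) by push_cast; ring,
    theta1_neg]

lemma en_add_div_en_sub_swap (τ η : ℂ) (a b : ℤ) :
    en τ η (b + a) / en τ η (b - a) = -(en τ η (a + b) / en τ η (a - b)) := by
  rw [← neg_sub, en_neg, div_neg, add_comm]

lemma Finset.prod_prod_comm_of_antisymm {ι R : Type*} [CommMonoid R] [HasDistribNeg R]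
    {F : ι → ι → R} (hF : ∀ a b, F b a = -F a b) (s t : Finset ι) :
    ∏ a ∈ s, ∏ b ∈ t, F a b = (-1) ^ (#s * #t) * ∏ b ∈ t, ∏ a ∈ s, F b a := by
  calc ∏ a ∈ s, ∏ b ∈ t, F a b = ∏ b ∈ t, ∏ a ∈ s, -F b a := by
        rw [prod_comm]
        exact prod_congr rfl fun b _ => prod_congr rfl fun a _ => hF b a
    _ = (-1) ^ (#s * #t) * ∏ b ∈ t, ∏ a ∈ s, F b a := by
        rw [pow_mul, ← prod_const ((-1 : R) ^ #s), ← prod_mul_distrib]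
        exact prod_congr rfl fun b _ => prod_neg _

lemma Finset.sdiff_mem_powerset_filter_sum {ι : Type*} [DecidableEq ι] (f : ι → ℕ)
    {s J : Finset ι} {j : ℕ} (hJ : J ∈ s.powerset.filter (fun J => J.sum f = j)) :
    s \ J ∈ s.powerset.filter (fun J => J.sum f = s.sum f - j) := by
  rw [mem_filter, mem_powerset] at hJ ⊢
  obtain ⟨hJs, rfl⟩ := hJ
  refine ⟨sdiff_subset, ?_⟩
  rw [← sum_sdiff (f := f) hJs, Nat.add_sub_cancel]

lemma sum_Icc_one_id (ℓ : ℕ) : (Icc 1 ℓ).sum id = ℓ * (ℓ + 1) / 2 := by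
  induction ℓ with
  | zero => simp
  | succ n ih =>
      rw [sum_Icc_succ_top (by omega), ih, id]
      have h : (n + 1) * (n + 1 + 1) = n * (n + 1) + 2 * (n + 1) := by ring
      omega

lemma two_mul_mul_pred_div_two_add (c : ℕ) : 2 * (c * (c - 1) / 2) + c = c * c := by
  rw [Nat.two_mul_div_two_of_even (Nat.even_mul_pred_self c)]
  rcases c with _ | c
  · rfl
  · rw [Nat.add_sub_cancel]; ring

/-- `κ(J) + j + κ(Jᶜ) + (N - j) + |J| |Jᶜ|` is even, where `c = |J|` and `d = |Jᶜ|`. -/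
lemma even_compl_sign_exponent {c d j N : ℕ} (hN : N = (c + d) * (c + d + 1) / 2)
    (hj : j ≤ N) :
    Even (c * (c + d) + c * (c - 1) / 2 + j +
      (d * (c + d) + d * (d - 1) / 2 + (N - j) + d * c)) := by
  have hN2 : 2 * N = (c + d) * (c + d + 1) := by
    rw [hN, Nat.two_mul_div_two_of_even (Nat.even_mul_succ_self _)]
  have hc := two_mul_mul_pred_div_two_add c
  have hd := two_mul_mul_pred_div_two_add d
  have hNj := Nat.sub_add_cancel hj
  exact ⟨(c + d) ^ 2, by nlinarith⟩

lemma Ccoef_summand_compl (τ η : ℂ) {ℓ N j : ℕ} (hN : N = ℓ * (ℓ + 1) / 2) (hj : j ≤ N)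
    {J : Finset ℕ} (hJ : J ⊆ Icc 1 ℓ) :
    (-1 : ℂ) ^ (#J * ℓ + #J * (#J - 1) / 2 + j) *
        ∏ k ∈ J, ∏ k' ∈ Icc 1 ℓ \ J, en τ η ((k : ℤ) + (k' : ℤ)) / en τ η ((k : ℤ) - (k' : ℤ)) =
      (-1 : ℂ) ^ (#(Icc 1 ℓ \ J) * ℓ + #(Icc 1 ℓ \ J) * (#(Icc 1 ℓ \ J) - 1) / 2 + (N - j)) *
        ∏ k ∈ Icc 1 ℓ \ J, ∏ k' ∈ Icc 1 ℓ \ (Icc 1 ℓ \ J),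
          en τ η ((k : ℤ) + (k' : ℤ)) / en τ η ((k : ℤ) - (k' : ℤ)) := by
  set D := Icc 1 ℓ \ J
  have hcard : #J + #D = ℓ := by
    rw [add_comm, card_sdiff_add_card_eq_card hJ, Nat.card_Icc, Nat.add_sub_cancel]
  have hparity := even_compl_sign_exponent (c := #J) (d := #D) (hcard ▸ hN) hj
  rw [hcard] at hparity
  rw [Finset.sdiff_sdiff_eq_self hJ,
    prod_prod_comm_of_antisymm (fun a b : ℕ => en_add_div_en_sub_swap τ η a b) D J,
    ← mul_assoc, ← pow_add]
  exact congrArg (· * _) (neg_one_pow_congr (Nat.even_add.mp hparity))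

theorem Ccoef_symmetry_general
    (τ : ℂ) (ℓ : ℕ) (N : ℕ) (hN : N = ℓ*(ℓ+1)/2) (η : ℂ) :
    ∀ j : ℕ, j ≤ N → Ccoef τ η ℓ j = Ccoef τ η ℓ (N - j) := by
  intro j hj
  have hsum : (Icc 1 ℓ).sum id = N := hN ▸ sum_Icc_one_id ℓ
  have subset_of_mem {J : Finset ℕ} {i : ℕ}
      (hJ : J ∈ (Icc 1 ℓ).powerset.filter (fun J => J.sum id = i)) : J ⊆ Icc 1 ℓ :=
    mem_powerset.mp (mem_filter.mp hJ).1
  refine sum_nbij' (Icc 1 ℓ \ ·) (Icc 1 ℓ \ ·)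
    (fun J hJ => hsum ▸ sdiff_mem_powerset_filter_sum id hJ) (fun J hJ => ?_)
    (fun J hJ => Finset.sdiff_sdiff_eq_self (subset_of_mem hJ))
    (fun J hJ => Finset.sdiff_sdiff_eq_self (subset_of_mem hJ))
    (fun J hJ => Ccoef_summand_compl τ η hN hj (subset_of_mem hJ))
  simpa only [hsum, Nat.sub_sub_self hj] using sdiff_mem_powerset_filter_sum id hJ

/-- Proposition 3.1: the symmetry C_j^{(ℓ)} = C_{N−j}^{(ℓ)}. -/
theorem Ccoef_symmetry
    (τ : ℂ) (hτ : 0 < τ.im) (ℓ : ℕ) (hℓ : 0 < ℓ) (N : ℕ) (hN : N = ℓ*(ℓ+1)/2) (η : ℂ)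
    (hη : ∀ n : ℕ, 1 ≤ n → n ≤ 2*ℓ → theta1 τ (2*(n : ℂ)*η) ≠ 0) :
    ∀ j : ℕ, j ≤ N → Ccoef τ η ℓ j = Ccoef τ η ℓ (N - j) :=
  Ccoef_symmetry_general τ ℓ N hN η
end

section
/- Let ℓ be a positive integer, τ ∈ ℂ with Im τ > 0, and η ∈ ℂ with θ1(2nη) ≠ 0 for all integers 1 ≤ n ≤ 2ℓ. If ζ ∈ ℂ, K ∈ ℂ with K ≠ 0, and E ∈ ℂ satisfy both equations Σ_{j=0}^{ℓ} (−1)^j K^{−j} θ1(ζ−2jη) [ℓ over j] A_{jη}(E) = 0 and Σ_{j=0}^{ℓ+1} (−1)^j K^{−j} θ1(ζ−2jη) θ1(2(j−1)η) [ℓ+1 over j] A_{(j−1)η}(E) = 0, then the triple (ζ, −K, −E) also satisfies both equations. -/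
open Complex Finset

/-!
The recurrence for the `A`'s changes sign by `(-1)` in its `E`-term and not in the other, so
`A_{(ℓ-s)η}(-E) = (-1)^s A_{(ℓ-s)η}(E)`. Hence `(K, E) ↦ (-K, -E)` multiplies the `j`-th term of
either equation by `(-1)^(j+s)`, with `s` the index of its `A`. Along each equation `j + s` has
constant parity: `j + (ℓ - j) = ℓ` in the first; in the second `j + (ℓ - |j - 1|)` is `ℓ + 1`,
except at `j = 0`, where `A_{-η} = A_η` gives `ℓ - 1`. So each equation is multiplied by a
global sign.
-/

section Reflection

variable (τ η : ℂ) (ℓ : ℕ)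

noncomputable def spectralCurve₁ (ζ K E : ℂ) : ℂ :=
  ∑ j ∈ Finset.range (ℓ + 1), (-1 : ℂ)^j * K⁻¹^j * theta1 τ (ζ - 2*(j : ℂ)*η)
    * ebinom τ η ℓ j * Apoly τ η ℓ E (ℓ - j)

noncomputable def spectralCurve₂ (ζ K E : ℂ) : ℂ :=
  ∑ j ∈ Finset.range (ℓ + 2), (-1 : ℂ)^j * K⁻¹^j * theta1 τ (ζ - 2*(j : ℂ)*η)
    * theta1 τ (2*((j : ℂ) - 1)*η) * ebinom τ η (ℓ + 1) j
    * Apoly τ η ℓ E (ℓ - ((j : ℤ) - 1).natAbs)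

lemma Apoly_neg (E : ℂ) : ∀ s, Apoly τ η ℓ (-E) s = (-1) ^ s * Apoly τ η ℓ E s
  | 0 => by simp [Apoly]
  | 1 => by simp only [Apoly]; ring
  | s + 2 => by
      rw [Apoly, Apoly, Apoly_neg E (s + 1), Apoly_neg E s]
      ring

lemma inv_neg_pow_mul_Apoly_neg (K E : ℂ) (j s : ℕ) :
    (-K)⁻¹ ^ j * Apoly τ η ℓ (-E) s = (-1) ^ (s + j) * (K⁻¹ ^ j * Apoly τ η ℓ E s) := by
  rw [Apoly_neg, inv_neg, neg_pow, pow_add]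
  ring

lemma spectralCurve₁_neg (ζ K E : ℂ) :
    spectralCurve₁ τ η ℓ ζ (-K) (-E) = (-1) ^ ℓ * spectralCurve₁ τ η ℓ ζ K E := by
  rw [spectralCurve₁, spectralCurve₁, mul_sum]
  refine sum_congr rfl fun j hj => ?_
  have hsign : (-1 : ℂ) ^ (ℓ - j + j) = (-1) ^ ℓ := by
    rw [Nat.sub_add_cancel (Nat.lt_succ_iff.mp (mem_range.mp hj))]
  linear_combination (-1 : ℂ) ^ j * theta1 τ (ζ - 2*(j : ℂ)*η) * ebinom τ η ℓ j *
    (inv_neg_pow_mul_Apoly_neg τ η ℓ K E j (ℓ - j)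
      + K⁻¹ ^ j * Apoly τ η ℓ E (ℓ - j) * hsign)

lemma spectralCurve₂_neg (hℓ : 0 < ℓ) (ζ K E : ℂ) :
    spectralCurve₂ τ η ℓ ζ (-K) (-E) = (-1) ^ (ℓ + 1) * spectralCurve₂ τ η ℓ ζ K E := by
  rw [spectralCurve₂, spectralCurve₂, mul_sum]
  refine sum_congr rfl fun j hj => ?_
  have hj' : j ≤ ℓ + 1 := Nat.lt_succ_iff.mp (mem_range.mp hj)
  set s := ℓ - ((j : ℤ) - 1).natAbs
  have hsign : (-1 : ℂ) ^ (s + j) = (-1) ^ (ℓ + 1) := by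
    obtain h | h : s + j = ℓ + 1 ∨ s + j + 2 = ℓ + 1 := by omega
    · rw [h]
    · rw [← h, pow_add]
      ring
  linear_combination (-1 : ℂ) ^ j * theta1 τ (ζ - 2*(j : ℂ)*η) * theta1 τ (2*((j : ℂ) - 1)*η) *
    ebinom τ η (ℓ + 1) j *
    (inv_neg_pow_mul_Apoly_neg τ η ℓ K E j s + K⁻¹ ^ j * Apoly τ η ℓ E s * hsign)

end Reflection

theorem spectral_curve_reflection_involution_general
    (τ : ℂ) (ℓ : ℕ) (hℓ : 0 < ℓ) (η : ℂ)
    (ζ K E : ℂ)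
    (h1 : ∑ j ∈ Finset.range (ℓ + 1), (-1 : ℂ)^j * K⁻¹^j * theta1 τ (ζ - 2*(j : ℂ)*η)
        * ebinom τ η ℓ j * Apoly τ η ℓ E (ℓ - j) = 0)
    (h2 : ∑ j ∈ Finset.range (ℓ + 2), (-1 : ℂ)^j * K⁻¹^j * theta1 τ (ζ - 2*(j : ℂ)*η)
        * theta1 τ (2*((j : ℂ) - 1)*η) * ebinom τ η (ℓ + 1) j
        * Apoly τ η ℓ E (ℓ - ((j : ℤ) - 1).natAbs) = 0) :
    (∑ j ∈ Finset.range (ℓ + 1), (-1 : ℂ)^j * (-K)⁻¹^j * theta1 τ (ζ - 2*(j : ℂ)*η)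
        * ebinom τ η ℓ j * Apoly τ η ℓ (-E) (ℓ - j) = 0)
    ∧ (∑ j ∈ Finset.range (ℓ + 2), (-1 : ℂ)^j * (-K)⁻¹^j * theta1 τ (ζ - 2*(j : ℂ)*η)
        * theta1 τ (2*((j : ℂ) - 1)*η) * ebinom τ η (ℓ + 1) j
        * Apoly τ η ℓ (-E) (ℓ - ((j : ℤ) - 1).natAbs) = 0) := by
  constructor
  · change spectralCurve₁ τ η ℓ ζ (-K) (-E) = 0
    rw [spectralCurve₁_neg, spectralCurve₁, h1, mul_zero]
  · change spectralCurve₂ τ η ℓ ζ (-K) (-E) = 0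
    rw [spectralCurve₂_neg τ η ℓ hℓ, spectralCurve₂, h2, mul_zero]

/-- the spectral curve admits the involution (ζ, K, E) ↦ (ζ, −K, −E). -/
theorem spectral_curve_reflection_involution
    (τ : ℂ) (hτ : 0 < τ.im) (ℓ : ℕ) (hℓ : 0 < ℓ) (η : ℂ)
    (hη : ∀ n : ℕ, 1 ≤ n → n ≤ 2*ℓ → theta1 τ (2*(n : ℂ)*η) ≠ 0)
    (ζ K E : ℂ) (hK : K ≠ 0)
    (h1 : ∑ j ∈ Finset.range (ℓ + 1), (-1 : ℂ)^j * K⁻¹^j * theta1 τ (ζ - 2*(j : ℂ)*η)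
        * ebinom τ η ℓ j * Apoly τ η ℓ E (ℓ - j) = 0)
    (h2 : ∑ j ∈ Finset.range (ℓ + 2), (-1 : ℂ)^j * K⁻¹^j * theta1 τ (ζ - 2*(j : ℂ)*η)
        * theta1 τ (2*((j : ℂ) - 1)*η) * ebinom τ η (ℓ + 1) j
        * Apoly τ η ℓ E (ℓ - ((j : ℤ) - 1).natAbs) = 0) :
    (∑ j ∈ Finset.range (ℓ + 1), (-1 : ℂ)^j * (-K)⁻¹^j * theta1 τ (ζ - 2*(j : ℂ)*η)
        * ebinom τ η ℓ j * Apoly τ η ℓ (-E) (ℓ - j) = 0)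
    ∧ (∑ j ∈ Finset.range (ℓ + 2), (-1 : ℂ)^j * (-K)⁻¹^j * theta1 τ (ζ - 2*(j : ℂ)*η)
        * theta1 τ (2*((j : ℂ) - 1)*η) * ebinom τ η (ℓ + 1) j
        * Apoly τ η ℓ (-E) (ℓ - ((j : ℤ) - 1).natAbs) = 0) :=
  spectral_curve_reflection_involution_general τ ℓ hℓ η ζ K E h1 h2
end

section
/- Let ℓ be a positive integer, τ ∈ ℂ with Im τ > 0, and η ∈ ℂ with θ1(2nη) ≠ 0 for all integers 1 ≤ n ≤ 2ℓ. If ζ ∈ ℂ, K ∈ ℂ with K ≠ 0, and E ∈ ℂ satisfy both equations Σ_{j=0}^{ℓ} (−1)^j K^{−j} θ1(ζ−2jη) [ℓ over j] A_{jη}(E) = 0 and Σ_{j=0}^{ℓ+1} (−1)^j K^{−j} θ1(ζ−2jη) θ1(2(j−1)η) [ℓ+1 over j] A_{(j−1)η}(E) = 0, then the triple (ζ+τ, K·e^{4πiη}, E) also satisfies both equations. -/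
/-!
The quasi-periodicity θ₁(x + τ) = -e^{-πiτ - 2πix} θ₁(x) multiplies the `j`-th term of either
equation, where x = ζ - 2jη, by -e^{-πiτ - 2πiζ} · e^{4πijη}. The `j`-dependent factor is exactly
cancelled by K ↦ K e^{4πiη}, so both equations are merely rescaled by a common constant.
-/

open Complex Finset

noncomputable def theta1Multiplier (τ x : ℂ) : ℂ :=
  -exp (-(Real.pi : ℂ) * I * τ - 2 * (Real.pi : ℂ) * I * x)

theorem theta1_add_tau (τ x : ℂ) : theta1 τ (x + τ) = theta1Multiplier τ x * theta1 τ x := by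
  have neg_one : (-1 : ℂ) = exp (-((Real.pi : ℂ) * I)) := by
    rw [exp_neg, exp_pi_mul_I]; norm_num
  unfold theta1 theta1Multiplier
  rw [← tsum_mul_left]
  -- completing the square: the shift `x ↦ x + τ` becomes the index shift `k ↦ k + 1`
  refine Eq.trans ?_ ((Equiv.addRight (1 : ℤ)).tsum_eq _)
  refine tsum_congr fun k => ?_
  rw [neg_mul, neg_eq_neg_one_mul, neg_one, ← exp_add, ← exp_add, Equiv.coe_addRight]
  push_cast
  congr 1
  ring

theorem inv_pow_mul_theta1_lattice_shift (τ η ζ K : ℂ) (j : ℕ) :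
    (K * exp (4 * (Real.pi : ℂ) * I * η))⁻¹ ^ j * theta1 τ ((ζ + τ) - 2 * (j : ℂ) * η) =
      theta1Multiplier τ ζ * (K⁻¹ ^ j * theta1 τ (ζ - 2 * (j : ℂ) * η)) := by
  have multiplier_shift : (exp (4 * (Real.pi : ℂ) * I * η))⁻¹ ^ j *
      theta1Multiplier τ (ζ - 2 * (j : ℂ) * η) = theta1Multiplier τ ζ := by
    rw [theta1Multiplier, theta1Multiplier, mul_neg, ← exp_neg, ← exp_nat_mul, ← exp_add]
    ring_nf
  rw [show (ζ + τ) - 2 * (j : ℂ) * η = (ζ - 2 * (j : ℂ) * η) + τ by ring, theta1_add_tau,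
    ← multiplier_shift, mul_inv, mul_pow]
  ring

theorem spectral_curve_lattice_invariance_general
    (τ : ℂ) (ℓ : ℕ) (η : ℂ)
    (ζ K E : ℂ)
    (h1 : ∑ j ∈ Finset.range (ℓ + 1), (-1 : ℂ)^j * K⁻¹^j * theta1 τ (ζ - 2*(j : ℂ)*η)
        * ebinom τ η ℓ j * Apoly τ η ℓ E (ℓ - j) = 0)
    (h2 : ∑ j ∈ Finset.range (ℓ + 2), (-1 : ℂ)^j * K⁻¹^j * theta1 τ (ζ - 2*(j : ℂ)*η)
        * theta1 τ (2*((j : ℂ) - 1)*η) * ebinom τ η (ℓ + 1) j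
        * Apoly τ η ℓ E (ℓ - ((j : ℤ) - 1).natAbs) = 0) :
    (∑ j ∈ Finset.range (ℓ + 1), (-1 : ℂ)^j
        * (K * Complex.exp (4*(Real.pi : ℂ)*Complex.I*η))⁻¹^j
        * theta1 τ ((ζ + τ) - 2*(j : ℂ)*η)
        * ebinom τ η ℓ j * Apoly τ η ℓ E (ℓ - j) = 0)
    ∧ (∑ j ∈ Finset.range (ℓ + 2), (-1 : ℂ)^j
        * (K * Complex.exp (4*(Real.pi : ℂ)*Complex.I*η))⁻¹^j
        * theta1 τ ((ζ + τ) - 2*(j : ℂ)*η)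
        * theta1 τ (2*((j : ℂ) - 1)*η) * ebinom τ η (ℓ + 1) j
        * Apoly τ η ℓ E (ℓ - ((j : ℤ) - 1).natAbs) = 0) := by
  constructor
  · rw [← mul_zero (theta1Multiplier τ ζ), ← h1, mul_sum]
    refine sum_congr rfl fun j _ => ?_
    rw [mul_assoc ((-1 : ℂ) ^ j), inv_pow_mul_theta1_lattice_shift]
    ring
  · rw [← mul_zero (theta1Multiplier τ ζ), ← h2, mul_sum]
    refine sum_congr rfl fun j _ => ?_
    rw [mul_assoc ((-1 : ℂ) ^ j), inv_pow_mul_theta1_lattice_shift]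
    ring

/-- the spectral curve is invariant under the lattice transformation
(ζ, K) ↦ (ζ + τ, K·e^{4πiη}). -/
theorem spectral_curve_lattice_invariance
    (τ : ℂ) (hτ : 0 < τ.im) (ℓ : ℕ) (hℓ : 0 < ℓ) (η : ℂ)
    (hη : ∀ n : ℕ, 1 ≤ n → n ≤ 2*ℓ → theta1 τ (2*(n : ℂ)*η) ≠ 0)
    (ζ K E : ℂ) (hK : K ≠ 0)
    (h1 : ∑ j ∈ Finset.range (ℓ + 1), (-1 : ℂ)^j * K⁻¹^j * theta1 τ (ζ - 2*(j : ℂ)*η)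
        * ebinom τ η ℓ j * Apoly τ η ℓ E (ℓ - j) = 0)
    (h2 : ∑ j ∈ Finset.range (ℓ + 2), (-1 : ℂ)^j * K⁻¹^j * theta1 τ (ζ - 2*(j : ℂ)*η)
        * theta1 τ (2*((j : ℂ) - 1)*η) * ebinom τ η (ℓ + 1) j
        * Apoly τ η ℓ E (ℓ - ((j : ℤ) - 1).natAbs) = 0) :
    (∑ j ∈ Finset.range (ℓ + 1), (-1 : ℂ)^j
        * (K * Complex.exp (4*(Real.pi : ℂ)*Complex.I*η))⁻¹^j
        * theta1 τ ((ζ + τ) - 2*(j : ℂ)*η)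
        * ebinom τ η ℓ j * Apoly τ η ℓ E (ℓ - j) = 0)
    ∧ (∑ j ∈ Finset.range (ℓ + 2), (-1 : ℂ)^j
        * (K * Complex.exp (4*(Real.pi : ℂ)*Complex.I*η))⁻¹^j
        * theta1 τ ((ζ + τ) - 2*(j : ℂ)*η)
        * theta1 τ (2*((j : ℂ) - 1)*η) * ebinom τ η (ℓ + 1) j
        * Apoly τ η ℓ E (ℓ - ((j : ℤ) - 1).natAbs) = 0) :=
  spectral_curve_lattice_invariance_general τ ℓ η ζ K E h1 h2
end

section
/- Let ℓ be a positive integer, τ ∈ ℂ with Im τ > 0, η ∈ ℂ with θ1(2nη) ≠ 0 for all integers 1 ≤ n ≤ 2ℓ, ζ ∈ ℂ with θ1(ζ) ≠ 0, μ ∈ ℂ with K = e^{μη}, s_1,…,s_ℓ ∈ ℂ, and fix an integer 1 ≤ m ≤ ℓ. Define Ψ(x) = e^{μx}·(∏_{j=1}^{ℓ} θ1(2x−2jη))·Σ_{n=1}^{ℓ} s_n·Φ(2x−2nη, ζ) for all x at which θ1(2x−2nη) ≠ 0 for every 1 ≤ n ≤ ℓ. Then the limit of Ψ(x) as x → mη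 exists and equals K^m s_m ∏_{j=1, j≠m}^{ℓ} θ1(2(m−j)η); moreover this limit equals Ψ(−mη) if and only if K^m s_m = (−1)^ℓ K^{−m} θ1(4mη) (∏_{j=1, j≠m}^{ℓ} θ1(2(m+j)η)/θ1(2(m−j)η)) · Σ_{n=1}^{ℓ} Φ(−2(m+n)η, ζ) s_n. -/
open Complex Finset

/-- The double-Bloch ansatz Ψ(x) = e^{μx}·(∏_{j=1}^ℓ θ₁(2x−2jη))·Σ_{n=1}^ℓ s_n Φ(2x−2nη, ζ). -/
noncomputable def PsiAnsatz (τ η ζ μ : ℂ) (ℓ : ℕ) (s : ℕ → ℂ) (x : ℂ) : ℂ :=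
  Complex.exp (μ * x) * (∏ j ∈ Finset.Icc 1 ℓ, theta1 τ (2*x - 2*(j : ℂ)*η)) *
    ∑ n ∈ Finset.Icc 1 ℓ, s n * Phi τ (2*x - 2*(n : ℂ)*η) ζ

/-!
Each term `s n Φ(2x − 2nη, ζ)` has a simple pole only where `θ₁(2x − 2nη)` vanishes, and the
prefactor `∏ⱼ θ₁(2x − 2jη)` cancels it. So on its domain `Ψ` agrees with an entire function, whose
value at `mη` is the single surviving term `n = m` (all the others contain the factor
`θ₁(0) = 0`). At `−mη` no cancellation is needed; by oddness of `θ₁` the prefactor there is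
`(−1)^ℓ θ₁(4mη) ∏_{j ≠ m} [m + j]`, and the gluing condition is the resulting equation divided by
`∏_{j ≠ m} [m − j]`, which is nonzero since `[k] ≠ 0` for `0 < |k| ≤ 2ℓ`.
-/

lemma theta1_eq_exp_mul_jacobiTheta₂ (τ x : ℂ) :
    theta1 τ x = exp (Real.pi * I * τ / 4 + Real.pi * I * x + Real.pi * I / 2) *
      jacobiTheta₂ (x + 1/2 + τ/2) τ := by
  rw [theta1, jacobiTheta₂, ← tsum_mul_left]
  refine tsum_congr fun k => ?_
  rw [jacobiTheta₂_term, ← exp_add]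
  ring_nf

lemma continuous_theta1 {τ : ℂ} (hτ : 0 < τ.im) : Continuous (theta1 τ) := by
  have hθ : Continuous fun x : ℂ => jacobiTheta₂ (x + 1/2 + τ/2) τ :=
    continuous_iff_continuousAt.2 fun x =>
      (continuousAt_jacobiTheta₂ (x + 1/2 + τ/2) hτ).comp
        (f := fun y : ℂ => (y + 1/2 + τ/2, τ)) (by fun_prop)
  rw [funext (theta1_eq_exp_mul_jacobiTheta₂ τ)]
  fun_prop

lemma theta1_zero (τ : ℂ) : theta1 τ 0 = 0 := by
  have h := theta1_neg τ 0
  rw [neg_zero] at h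
  linear_combination h / 2

lemma en_ne_zero {τ η : ℂ} {N : ℕ}
    (hη : ∀ n : ℕ, 1 ≤ n → n ≤ N → theta1 τ (2 * (n : ℂ) * η) ≠ 0)
    {n : ℤ} (hn₀ : n ≠ 0) (hnN : n.natAbs ≤ N) : en τ η n ≠ 0 := by
  have hpos : 1 ≤ n.natAbs := Int.natAbs_pos.mpr hn₀
  rcases Int.natAbs_eq n with h | h <;> rw [h]
  · simpa [en] using hη _ hpos hnN
  · rw [en_neg, neg_ne_zero]
    simpa [en] using hη _ hpos hnN

lemma prod_mul_sum_div_eq_sum_mul_prod_erase {ι K : Type*} [DecidableEq ι] [Field K]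
    (S : Finset ι) (f g s : ι → K) (c : K) (hf : ∀ n ∈ S, f n ≠ 0) :
    (∏ j ∈ S, f j) * ∑ n ∈ S, s n * (g n / (f n * c))
      = ∑ n ∈ S, s n * (g n / c * ∏ j ∈ S.erase n, f j) := by
  rw [mul_sum]
  refine sum_congr rfl fun n hn => ?_
  rw [← mul_prod_erase _ _ hn]
  field_simp [hf n hn]

section Ansatz

variable (τ η ζ μ : ℂ) (ℓ : ℕ) (s : ℕ → ℂ)

/-- `Ψ` with the poles of `Φ` cancelled against the theta prefactor. -/
noncomputable def PsiAnsatzReg (x : ℂ) : ℂ :=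
  exp (μ * x) * ∑ n ∈ Icc 1 ℓ, s n *
    (theta1 τ (ζ + (2*x - 2*(n : ℂ)*η)) / theta1 τ ζ *
      ∏ j ∈ (Icc 1 ℓ).erase n, theta1 τ (2*x - 2*(j : ℂ)*η))

lemma continuous_PsiAnsatzReg (hτ : 0 < τ.im) : Continuous (PsiAnsatzReg τ η ζ μ ℓ s) := by
  have hθ := continuous_theta1 hτ
  unfold PsiAnsatzReg
  refine (continuous_exp.comp (continuous_const.mul continuous_id)).mul ?_
  refine continuous_finsetSum _ fun n _ => continuous_const.mul ?_
  exact ((hθ.comp (by fun_prop)).div_const _).mul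
    (continuous_finsetProd _ fun j _ => hθ.comp (by fun_prop))

variable {τ η ζ μ ℓ}

lemma PsiAnsatz_eq_PsiAnsatzReg {x : ℂ}
    (hx : ∀ n ∈ Icc 1 ℓ, theta1 τ (2*x - 2*(n : ℂ)*η) ≠ 0) :
    PsiAnsatz τ η ζ μ ℓ s x = PsiAnsatzReg τ η ζ μ ℓ s x := by
  rw [PsiAnsatz, PsiAnsatzReg, mul_assoc]
  congr 1
  simp only [Phi]
  exact prod_mul_sum_div_eq_sum_mul_prod_erase _ (fun j : ℕ => theta1 τ (2*x - 2*(j : ℂ)*η))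
    _ _ _ hx

lemma PsiAnsatzReg_mul_eta (hζ : theta1 τ ζ ≠ 0) {m : ℕ} (hm : m ∈ Icc 1 ℓ) :
    PsiAnsatzReg τ η ζ μ ℓ s (m * η)
      = exp (μ * (m * η)) * s m * ∏ j ∈ (Icc 1 ℓ).erase m, en τ η ((m : ℤ) - (j : ℤ)) := by
  have hm_self : 2 * ((m : ℂ) * η) - 2 * m * η = 0 := by ring
  rw [PsiAnsatzReg, sum_eq_single_of_mem m hm]
  · rw [hm_self, add_zero, div_self hζ, one_mul, ← mul_assoc]
    congr 1
    refine prod_congr rfl fun j _ => ?_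
    rw [en]
    push_cast
    ring_nf
  · intro n hn hnm
    rw [prod_eq_zero (mem_erase.mpr ⟨Ne.symm hnm, hm⟩) (by rw [hm_self, theta1_zero]),
      mul_zero, mul_zero]

lemma tendsto_PsiAnsatz_mul_eta (hτ : 0 < τ.im) (hζ : theta1 τ ζ ≠ 0) {m : ℕ}
    (hm : m ∈ Icc 1 ℓ) :
    Filter.Tendsto (PsiAnsatz τ η ζ μ ℓ s)
      (nhdsWithin (m * η) {x : ℂ | ∀ n ∈ Icc 1 ℓ, theta1 τ (2*x - 2*(n : ℂ)*η) ≠ 0})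
      (nhds (exp (μ * (m * η)) * s m * ∏ j ∈ (Icc 1 ℓ).erase m, en τ η ((m : ℤ) - (j : ℤ)))) := by
  rw [← PsiAnsatzReg_mul_eta s hζ hm]
  refine (continuous_PsiAnsatzReg τ η ζ μ ℓ s hτ).continuousAt.continuousWithinAt.tendsto.congr' ?_
  filter_upwards [self_mem_nhdsWithin] with x hx
  exact (PsiAnsatz_eq_PsiAnsatzReg s hx).symm

lemma prod_theta1_neg_mul_eta {m : ℕ} (hm : m ∈ Icc 1 ℓ) :
    ∏ j ∈ Icc 1 ℓ, theta1 τ (2 * -((m : ℂ) * η) - 2 * j * η)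
      = (-1) ^ ℓ * theta1 τ (4 * m * η) * ∏ j ∈ (Icc 1 ℓ).erase m, en τ η ((m : ℤ) + (j : ℤ)) := by
  have hterm : ∀ j : ℕ,
      theta1 τ (2 * -((m : ℂ) * η) - 2 * j * η) = -1 * en τ η ((m : ℤ) + (j : ℤ)) := by
    intro j
    rw [neg_one_mul, ← en_neg, en]
    push_cast
    ring_nf
  have hself : en τ η ((m : ℤ) + (m : ℤ)) = theta1 τ (4 * m * η) := by
    rw [en]
    push_cast
    ring_nf
  rw [prod_congr rfl fun j _ => hterm j, prod_mul_distrib, prod_const, Nat.card_Icc,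
    Nat.add_sub_cancel, ← mul_prod_erase _ _ hm, hself, ← mul_assoc]

lemma PsiAnsatz_neg_mul_eta {m : ℕ} (hm : m ∈ Icc 1 ℓ) :
    PsiAnsatz τ η ζ μ ℓ s (-(m * η))
      = (-1) ^ ℓ * exp (μ * -(m * η)) * theta1 τ (4 * m * η) *
          (∏ j ∈ (Icc 1 ℓ).erase m, en τ η ((m : ℤ) + (j : ℤ))) *
          ∑ n ∈ Icc 1 ℓ, Phi τ (-2 * ((m : ℂ) + n) * η) ζ * s n := by
  have hsum : ∑ n ∈ Icc 1 ℓ, s n * Phi τ (2 * -((m : ℂ) * η) - 2 * n * η) ζ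
      = ∑ n ∈ Icc 1 ℓ, Phi τ (-2 * ((m : ℂ) + n) * η) ζ * s n :=
    sum_congr rfl fun n _ => by rw [mul_comm]; ring_nf
  rw [PsiAnsatz, prod_theta1_neg_mul_eta hm, hsum]
  ring

end Ansatz

theorem PsiAnsatz_limit_and_gluing_general
    (τ : ℂ) (hτ : 0 < τ.im) (ℓ : ℕ) (η : ℂ)
    (hη : ∀ n : ℕ, 1 ≤ n → n ≤ 2*ℓ → theta1 τ (2*(n : ℂ)*η) ≠ 0)
    (ζ : ℂ) (hζ : theta1 τ ζ ≠ 0) (μ K : ℂ) (hK : K = Complex.exp (μ * η))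
    (s : ℕ → ℂ) (m : ℕ) (hm1 : 1 ≤ m) (hm2 : m ≤ ℓ) :
    Filter.Tendsto (PsiAnsatz τ η ζ μ ℓ s)
      (nhdsWithin ((m : ℂ) * η)
        {x : ℂ | ∀ n ∈ Finset.Icc 1 ℓ, theta1 τ (2*x - 2*(n : ℂ)*η) ≠ 0})
      (nhds (K^m * s m * ∏ j ∈ (Finset.Icc 1 ℓ).erase m, en τ η ((m : ℤ) - (j : ℤ))))
    ∧ (K^m * s m * ∏ j ∈ (Finset.Icc 1 ℓ).erase m, en τ η ((m : ℤ) - (j : ℤ))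
          = PsiAnsatz τ η ζ μ ℓ s (-((m : ℂ) * η))
        ↔ K^m * s m
          = (-1 : ℂ)^ℓ * K⁻¹^m * theta1 τ (4*(m : ℂ)*η) *
            (∏ j ∈ (Finset.Icc 1 ℓ).erase m,
              en τ η ((m : ℤ) + (j : ℤ)) / en τ η ((m : ℤ) - (j : ℤ))) *
            ∑ n ∈ Finset.Icc 1 ℓ, Phi τ (-2*((m : ℂ) + (n : ℂ))*η) ζ * s n) := by
  have hm : m ∈ Icc 1 ℓ := mem_Icc.mpr ⟨hm1, hm2⟩
  have hKm : K ^ m = exp (μ * (m * η)) := by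
    rw [hK, ← exp_nat_mul]; ring_nf
  have hKinv : K⁻¹ ^ m = exp (μ * -(m * η)) := by
    rw [hK, ← exp_neg, ← exp_nat_mul]; ring_nf
  have hP : ∏ j ∈ (Icc 1 ℓ).erase m, en τ η ((m : ℤ) - (j : ℤ)) ≠ 0 := by
    refine prod_ne_zero_iff.mpr fun j hj => en_ne_zero hη ?_ ?_
    all_goals
      obtain ⟨hjm, hj⟩ := mem_erase.mp hj
      rw [mem_Icc] at hj
      omega
  refine ⟨hKm ▸ tendsto_PsiAnsatz_mul_eta s hτ hζ hm, ?_⟩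
  rw [PsiAnsatz_neg_mul_eta s hm, ← hKinv, ← eq_div_iff hP, prod_div_distrib]
  exact Eq.congr_right (by ring)

/-- the limit of Ψ at x = mη exists and equals
K^m s_m ∏_{j≠m} θ₁(2(m−j)η), and this limit equals Ψ(−mη) iff the m-th equation of
the linear system defining the spectral curve holds. -/
theorem PsiAnsatz_limit_and_gluing
    (τ : ℂ) (hτ : 0 < τ.im) (ℓ : ℕ) (hℓ : 0 < ℓ) (η : ℂ)
    (hη : ∀ n : ℕ, 1 ≤ n → n ≤ 2*ℓ → theta1 τ (2*(n : ℂ)*η) ≠ 0)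
    (ζ : ℂ) (hζ : theta1 τ ζ ≠ 0) (μ K : ℂ) (hK : K = Complex.exp (μ * η))
    (s : ℕ → ℂ) (m : ℕ) (hm1 : 1 ≤ m) (hm2 : m ≤ ℓ) :
    Filter.Tendsto (PsiAnsatz τ η ζ μ ℓ s)
      (nhdsWithin ((m : ℂ) * η)
        {x : ℂ | ∀ n ∈ Finset.Icc 1 ℓ, theta1 τ (2*x - 2*(n : ℂ)*η) ≠ 0})
      (nhds (K^m * s m * ∏ j ∈ (Finset.Icc 1 ℓ).erase m, en τ η ((m : ℤ) - (j : ℤ))))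
    ∧ (K^m * s m * ∏ j ∈ (Finset.Icc 1 ℓ).erase m, en τ η ((m : ℤ) - (j : ℤ))
          = PsiAnsatz τ η ζ μ ℓ s (-((m : ℂ) * η))
        ↔ K^m * s m
          = (-1 : ℂ)^ℓ * K⁻¹^m * theta1 τ (4*(m : ℂ)*η) *
            (∏ j ∈ (Finset.Icc 1 ℓ).erase m,
              en τ η ((m : ℤ) + (j : ℤ)) / en τ η ((m : ℤ) - (j : ℤ))) *
            ∑ n ∈ Finset.Icc 1 ℓ, Phi τ (-2*((m : ℂ) + (n : ℂ))*η) ζ * s n) :=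
  PsiAnsatz_limit_and_gluing_general τ hτ ℓ η hη ζ hζ μ K hK s m hm1 hm2
end

section
/- Let ℓ be a nonnegative integer, η ∈ ℂ, and let c_−, c_+, a_1, a_3, …, a_{2ℓ+1} : ℂ → ℂ be functions with a_{2ℓ+1}(x) ≠ 0 for all x. Define scalar difference operators (Lf)(x) = c_−(x) f(x+η) + c_+(x) f(x−η) and (Af)(x) = Σ_{k=0}^{ℓ} a_{2k+1}(x) f(x+(2k+1)η). For z ≠ 0 define the (2ℓ+1)×(2ℓ+1) matrix A(x,z) whose first row has entries z^{−1} a_{2k+1}(x) in columns 2k+1 (k = 0,…,ℓ) and zeros elsewhere, and whose row i (2 ≤ i ≤ 2ℓ+1) has a single 1 in column i−1; set C_±(x) = diag(c_±(x+η), c_±(x+2η), …, c_±(x+(2ℓ+1)η)) and L(x,z) = C_+(x)·A(x,z) + C_−(x)·A(x+η,z)^{−1}. Then L∘A = A∘L holds as an identity of operators on all functions ℂ → ℂ if and only if for every z ≠ 0 and every x ∈ ℂ one has L(x−η,z)·A(x,z) = A(x,z)·L(x,z). -/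
open Complex Finset

/-- The (2ℓ+1)×(2ℓ+1) matrix A(x,z) associated with the difference operator A:
first row has entries z⁻¹ a_{2k+1}(x) in columns 2k+1 (1-based) and zeros elsewhere;
row i (2 ≤ i ≤ 2ℓ+1) has a single 1 in column i−1. Here `a k` denotes a_{2k+1}. -/
noncomputable def AmatGen (ℓ : ℕ) (a : ℕ → ℂ → ℂ) (x z : ℂ) :
    Matrix (Fin (2*ℓ + 1)) (Fin (2*ℓ + 1)) ℂ :=
  Matrix.of fun i j =>
    if (i : ℕ) = 0 then (if Even (j : ℕ) then z⁻¹ * a ((j : ℕ) / 2) x else 0)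
    else (if (j : ℕ) + 1 = (i : ℕ) then 1 else 0)

/-- L(x,z) = C₊(x)·A(x,z) + C₋(x)·A(x+η,z)⁻¹, with C_±(x) = diag(c_±(x+iη), i=1..2ℓ+1). -/
noncomputable def LmatGen (ℓ : ℕ) (η : ℂ) (cm cp : ℂ → ℂ) (a : ℕ → ℂ → ℂ) (x z : ℂ) :
    Matrix (Fin (2*ℓ + 1)) (Fin (2*ℓ + 1)) ℂ :=
  Matrix.diagonal (fun i : Fin (2*ℓ + 1) => cp (x + (((i : ℕ) : ℂ) + 1)*η)) * AmatGen ℓ a x z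
    + Matrix.diagonal (fun i : Fin (2*ℓ + 1) => cm (x + (((i : ℕ) : ℂ) + 1)*η)) * (AmatGen ℓ a (x + η) z)⁻¹

/-!
Write `κₘ(x)` (`commCoeff`) for the coefficient of `f (x + 2mη)`, `0 ≤ m ≤ ℓ + 1`, in
`(A (L f) - L (A f))(x)`. For `η ≠ 0` these shifts are distinct points, so (testing against
indicator functions) `L ∘ A = A ∘ L` iff all `κₘ` vanish; for `η = 0` both hold trivially.

On the matrix side `A(x,z)` is a companion-type matrix whose inverse is explicit (`amatInv`).
Since `A(x,z)⁻¹ A(x,z) = 1`, rows `1, …, 2ℓ` of the Lax equation hold identically, and the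
defect `A L - L A` in row `0` is `z⁻² aₚ(x) κ₀(x) + [p = 0] κ_{ℓ+1}(x) / a_ℓ(x+η)` in column `2p`
and `z⁻¹ (κ_{p+1}(x) - a_p(x+η) κ_{ℓ+1}(x) / a_ℓ(x+η))` in column `2p+1`. Comparing two values
of `z` in column `0` isolates `κ_{ℓ+1}`; column `2ℓ` (where `a_ℓ ≠ 0`) then gives `κ₀`, and the
odd columns give the remaining `κₘ`.
-/

lemma Finset.sum_range_mul_succ_add_mul {R : Type*} [Semiring R] (u v g : ℕ → R) (n : ℕ) :
    ∑ k ∈ range (n + 1), (u k * g (k + 1) + v k * g k)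
      = ∑ m ∈ range (n + 2),
          ((if 1 ≤ m then u (m - 1) else 0) + (if m ≤ n then v m else 0)) * g m := by
  simp only [add_mul, sum_add_distrib]
  rw [sum_range_succ' (fun m => (if 1 ≤ m then u (m - 1) else 0) * g m),
    sum_range_succ (fun m => (if m ≤ n then v m else 0) * g m)]
  have hv : ∑ m ∈ range (n + 1), (if m ≤ n then v m else 0) * g m
      = ∑ m ∈ range (n + 1), v m * g m :=
    sum_congr rfl fun m hm => by rw [if_pos (Nat.lt_succ_iff.mp (mem_range.mp hm))]
  rw [hv]
  simp

lemma eq_zero_of_forall_sum_mul_shift_eq_zero {K : Type*} [Field K] [CharZero K] {h : K}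
    (hh : h ≠ 0) {N : ℕ} {c : ℕ → K} (x : K)
    (hc : ∀ f : K → K, ∑ m ∈ range N, c m * f (x + m * h) = 0) {m : ℕ} (hm : m < N) :
    c m = 0 := by
  classical
  have hshift : ∀ k, x + k * h = x + m * h ↔ k = m := by simp [hh]
  simpa [hshift, hm] using hc fun y => if y = x + m * h then 1 else 0

lemma Finset.sum_range_two_mul_add_one {M : Type*} [AddCommMonoid M] (f : ℕ → M) (n : ℕ) :
    ∑ k ∈ range (2 * n + 1), f k
      = ∑ m ∈ range (n + 1), f (2 * m) + ∑ m ∈ range n, f (2 * m + 1) := by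
  induction n with
  | zero => simp
  | succ n ih =>
    rw [show 2 * (n + 1) + 1 = 2 * n + 1 + 1 + 1 by ring, sum_range_succ, sum_range_succ, ih,
      sum_range_succ (fun m => f (2 * m)) (n + 1), sum_range_succ (fun m => f (2 * m + 1)) n,
      show 2 * n + 1 + 1 = 2 * (n + 1) by ring]
    abel

lemma Matrix.of_mul_of_apply_eq_sum_range {R : Type*} [NonUnitalNonAssocSemiring R] {n : ℕ}
    (f g : ℕ → ℕ → R) (i j : Fin n) :
    (Matrix.of (fun i j : Fin n => f i j) * Matrix.of (fun i j : Fin n => g i j)) i j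
      = ∑ k ∈ range n, f i k * g k j := by
  rw [Matrix.mul_apply]
  exact Fin.sum_univ_eq_sum_range (fun k => f i k * g k j) n

section Scalar

variable (ℓ : ℕ) (η : ℂ) (cm cp : ℂ → ℂ) (a : ℕ → ℂ → ℂ)

def diffOpL (f : ℂ → ℂ) (x : ℂ) : ℂ := cm x * f (x + η) + cp x * f (x - η)

def diffOpA (f : ℂ → ℂ) (x : ℂ) : ℂ :=
  ∑ k ∈ range (ℓ + 1), a k x * f (x + (2 * k + 1) * η)

/-- The coefficient of `f (x + 2mη)` in `(A (L f) - L (A f))(x)`. -/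
def commCoeff (m : ℕ) (x : ℂ) : ℂ :=
  (if 1 ≤ m then a (m - 1) x * cm (x + (2 * m - 1) * η) - cm x * a (m - 1) (x + η) else 0)
    + (if m ≤ ℓ then a m x * cp (x + (2 * m + 1) * η) - cp x * a m (x - η) else 0)

lemma diffOpA_diffOpL_sub_diffOpL_diffOpA (f : ℂ → ℂ) (x : ℂ) :
    diffOpA ℓ η a (diffOpL η cm cp f) x - diffOpL η cm cp (diffOpA ℓ η a f) x
      = ∑ m ∈ range (ℓ + 2), commCoeff ℓ η cm cp a m x * f (x + m * (2 * η)) := by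
  set g : ℕ → ℂ := fun m => f (x + m * (2 * η))
  have hAL : diffOpA ℓ η a (diffOpL η cm cp f) x = ∑ k ∈ range (ℓ + 1),
      (a k x * cm (x + (2 * k + 1) * η) * g (k + 1) + a k x * cp (x + (2 * k + 1) * η) * g k) := by
    refine sum_congr rfl fun k _ => ?_
    simp only [diffOpL, g]; push_cast; ring_nf
  have hLA : diffOpL η cm cp (diffOpA ℓ η a f) x = ∑ k ∈ range (ℓ + 1),
      (cm x * a k (x + η) * g (k + 1) + cp x * a k (x - η) * g k) := by
    simp only [diffOpL, diffOpA, mul_sum, ← sum_add_distrib]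
    refine sum_congr rfl fun k _ => ?_
    simp only [g]; push_cast; ring_nf
  rw [hAL, hLA, sum_range_mul_succ_add_mul, sum_range_mul_succ_add_mul, ← sum_sub_distrib]
  refine sum_congr rfl fun m _ => ?_
  obtain _ | m := m
  · simp [commCoeff, g]
    ring
  · simp only [commCoeff, g, le_add_iff_nonneg_left, zero_le, if_true, Nat.add_sub_cancel]
    push_cast
    split_ifs <;> ring_nf

lemma commCoeff_of_eta_eq_zero (m : ℕ) (x : ℂ) : commCoeff ℓ 0 cm cp a m x = 0 := by
  simp [commCoeff, mul_comm]

theorem diffOp_comm_iff_commCoeff_eq_zero :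
    (∀ f x, diffOpL η cm cp (diffOpA ℓ η a f) x = diffOpA ℓ η a (diffOpL η cm cp f) x)
      ↔ ∀ x, ∀ m < ℓ + 2, commCoeff ℓ η cm cp a m x = 0 := by
  constructor
  · intro hcomm x m hm
    rcases eq_or_ne η 0 with rfl | hη
    · exact commCoeff_of_eta_eq_zero ℓ cm cp a m x
    refine eq_zero_of_forall_sum_mul_shift_eq_zero (c := fun m => commCoeff ℓ η cm cp a m x)
      (mul_ne_zero two_ne_zero hη) x (fun f => ?_) hm
    rw [← diffOpA_diffOpL_sub_diffOpL_diffOpA, hcomm, sub_self]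
  · intro hcoeff f x
    rw [eq_comm, ← sub_eq_zero, diffOpA_diffOpL_sub_diffOpL_diffOpA]
    exact sum_eq_zero fun m hm => by rw [hcoeff x m (mem_range.mp hm), zero_mul]

variable {ℓ η cm cp a} {x : ℂ}

lemma commCoeff_zero : commCoeff ℓ η cm cp a 0 x = a 0 x * cp (x + η) - cp x * a 0 (x - η) := by
  simp [commCoeff]

lemma commCoeff_succ {p : ℕ} (hp : p < ℓ) :
    commCoeff ℓ η cm cp a (p + 1) x
      = a p x * cm (x + (2 * p + 1) * η) - cm x * a p (x + η)
        + (a (p + 1) x * cp (x + (2 * p + 3) * η) - cp x * a (p + 1) (x - η)) := by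
  simp [commCoeff, hp]
  ring_nf

lemma commCoeff_add_one_self :
    commCoeff ℓ η cm cp a (ℓ + 1) x = a ℓ x * cm (x + (2 * ℓ + 1) * η) - cm x * a ℓ (x + η) := by
  rw [commCoeff, if_pos (by omega), if_neg (by omega), add_zero, Nat.add_sub_cancel]
  push_cast
  ring_nf

end Scalar

section Companion

variable (ℓ : ℕ) (η : ℂ) (cm cp : ℂ → ℂ) (a : ℕ → ℂ → ℂ)

noncomputable def amatEntry (x z : ℂ) (i j : ℕ) : ℂ :=
  if i = 0 then (if Even j then z⁻¹ * a (j / 2) x else 0) else if j + 1 = i then 1 else 0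

noncomputable def amatInvEntry (x z : ℂ) (i j : ℕ) : ℂ :=
  if i = 2 * ℓ then (if j = 0 then z / a ℓ x else if Even j then 0 else -(a (j / 2) x / a ℓ x))
  else if j = i + 1 then 1 else 0

noncomputable def lmatEntry (x z : ℂ) (i j : ℕ) : ℂ :=
  cp (x + (i + 1) * η) * amatEntry a x z i j
    + cm (x + (i + 1) * η) * amatInvEntry ℓ a (x + η) z i j

noncomputable def amatInv (x z : ℂ) : Matrix (Fin (2 * ℓ + 1)) (Fin (2 * ℓ + 1)) ℂ :=
  Matrix.of fun i j : Fin (2 * ℓ + 1) => amatInvEntry ℓ a x z i j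

variable {ℓ a} {x z : ℂ}

lemma AmatGen_eq_of :
    AmatGen ℓ a x z = Matrix.of fun i j : Fin (2 * ℓ + 1) => amatEntry a x z i j :=
  rfl

lemma sum_amatEntry_zero_mul (F : ℕ → ℂ) :
    ∑ k ∈ range (2 * ℓ + 1), amatEntry a x z 0 k * F k
      = z⁻¹ * ∑ m ∈ range (ℓ + 1), a m x * F (2 * m) := by
  simp [sum_range_two_mul_add_one, amatEntry, mul_sum, mul_assoc]

lemma sum_amatEntry_succ_mul {N i : ℕ} (hi : i < N) (F : ℕ → ℂ) :
    ∑ k ∈ range N, amatEntry a x z (i + 1) k * F k = F i := by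
  simp [amatEntry, hi]

lemma sum_mul_amatEntry_two_mul_even (c : ℕ → ℂ) (p : ℕ) :
    ∑ m ∈ range (ℓ + 1), c m * amatEntry a x z (2 * m) (2 * p) = c 0 * (z⁻¹ * a p x) := by
  rw [sum_range_succ', sum_eq_zero fun m _ => by simp [amatEntry]; omega]
  simp [amatEntry]

lemma sum_mul_amatEntry_two_mul_odd (c : ℕ → ℂ) {p : ℕ} (hp : p < ℓ) :
    ∑ m ∈ range (ℓ + 1), c m * amatEntry a x z (2 * m) (2 * p + 1) = c (p + 1) := by
  rw [sum_eq_single (p + 1) (fun m _ hm => by simp [amatEntry]; omega) (by simp; omega)]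
  simp [amatEntry]; omega

lemma sum_mul_amatInvEntry_two_mul_even (c : ℕ → ℂ) (p : ℕ) :
    ∑ m ∈ range (ℓ + 1), c m * amatInvEntry ℓ a x z (2 * m) (2 * p)
      = if p = 0 then c ℓ * (z / a ℓ x) else 0 := by
  rw [sum_range_succ, sum_eq_zero fun m hm => by
    simp [amatInvEntry, (mem_range.mp hm).ne, show 2 * p ≠ 2 * m + 1 by omega]]
  by_cases hp : p = 0 <;> simp [amatInvEntry, hp]

lemma sum_mul_amatInvEntry_two_mul_odd (c : ℕ → ℂ) {p : ℕ} (hp : p < ℓ) :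
    ∑ m ∈ range (ℓ + 1), c m * amatInvEntry ℓ a x z (2 * m) (2 * p + 1)
      = c p - c ℓ * (a p x / a ℓ x) := by
  rw [sum_range_succ, sum_eq_single p (fun m hm' hm => by
    simp [amatInvEntry, (mem_range.mp hm').ne, Ne.symm hm]) (by simp; omega)]
  simp [amatInvEntry, Nat.mul_add_div, show 2 * p ≠ 2 * ℓ by omega]
  ring

lemma AmatGen_mul_amatInv (hz : z ≠ 0) (ha : a ℓ x ≠ 0) :
    AmatGen ℓ a x z * amatInv ℓ a x z = 1 := by
  ext ⟨i, hi⟩ ⟨j, hj⟩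
  rw [AmatGen_eq_of, amatInv, Matrix.of_mul_of_apply_eq_sum_range, Matrix.one_apply]
  simp only [Fin.mk.injEq]
  obtain _ | i := i
  · rw [sum_amatEntry_zero_mul]
    obtain ⟨p, rfl | rfl⟩ := Nat.even_or_odd' j
    · rw [sum_mul_amatInvEntry_two_mul_even]
      by_cases hp : p = 0 <;> simp [hp]
      field_simp
    · rw [sum_mul_amatInvEntry_two_mul_odd _ (by omega)]
      simp [mul_div_cancel₀ _ ha]
  · rw [sum_amatEntry_succ_mul (by omega : i < 2 * ℓ + 1)]
    simp [amatInvEntry, show i ≠ 2 * ℓ by omega, eq_comm]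

lemma inv_AmatGen (hz : z ≠ 0) (ha : a ℓ x ≠ 0) : (AmatGen ℓ a x z)⁻¹ = amatInv ℓ a x z :=
  Matrix.inv_eq_right_inv (AmatGen_mul_amatInv hz ha)

lemma amatInv_mul_AmatGen (hz : z ≠ 0) (ha : a ℓ x ≠ 0) :
    amatInv ℓ a x z * AmatGen ℓ a x z = 1 :=
  mul_eq_one_comm.mp (AmatGen_mul_amatInv hz ha)

lemma LmatGen_eq_of (hz : z ≠ 0) (ha : a ℓ (x + η) ≠ 0) :
    LmatGen ℓ η cm cp a x z
      = Matrix.of fun i j : Fin (2 * ℓ + 1) => lmatEntry ℓ η cm cp a x z i j := by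
  rw [LmatGen, inv_AmatGen hz ha]
  ext i j
  simp [Matrix.diagonal_mul, lmatEntry, amatInv, AmatGen_eq_of]

lemma LmatGen_sub_mul_AmatGen (hz : z ≠ 0) (ha : a ℓ x ≠ 0) :
    LmatGen ℓ η cm cp a (x - η) z * AmatGen ℓ a x z
      = Matrix.diagonal (fun i : Fin (2 * ℓ + 1) => cp (x + i * η))
          * (AmatGen ℓ a (x - η) z * AmatGen ℓ a x z)
        + Matrix.diagonal (fun i : Fin (2 * ℓ + 1) => cm (x + i * η)) := by
  rw [LmatGen, sub_add_cancel, inv_AmatGen hz ha, add_mul, Matrix.mul_assoc,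
    Matrix.mul_assoc, amatInv_mul_AmatGen hz ha, Matrix.mul_one]
  congr 3 <;> ext i <;> ring_nf

end Companion

section Lax

variable {ℓ : ℕ} {a : ℕ → ℂ → ℂ} (η : ℂ) (cm cp : ℂ → ℂ) (x z : ℂ)

lemma LmatGen_sub_mul_AmatGen_apply_succ (hz : z ≠ 0) (ha : ∀ y, a ℓ y ≠ 0)
    (i : Fin (2 * ℓ)) (j : Fin (2 * ℓ + 1)) :
    (LmatGen ℓ η cm cp a (x - η) z * AmatGen ℓ a x z) i.succ j
      = (AmatGen ℓ a x z * LmatGen ℓ η cm cp a x z) i.succ j := by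
  rw [LmatGen_sub_mul_AmatGen η cm cp hz (ha x), LmatGen_eq_of η cm cp hz (ha (x + η)),
    AmatGen_eq_of, AmatGen_eq_of]
  simp only [Matrix.add_apply, Matrix.diagonal_mul, Matrix.diagonal_apply,
    Matrix.of_mul_of_apply_eq_sum_range, Fin.val_succ]
  rw [sum_amatEntry_succ_mul (by omega), sum_amatEntry_succ_mul (by omega)]
  simp [lmatEntry, amatInvEntry, show (i : ℕ) ≠ 2 * ℓ by omega, Fin.ext_iff, eq_comm]

lemma lax_defect_zero_even (hz : z ≠ 0) (ha : ∀ y, a ℓ y ≠ 0) {p : ℕ}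
    (hp : 2 * p < 2 * ℓ + 1) :
    (AmatGen ℓ a x z * LmatGen ℓ η cm cp a x z) 0 ⟨2 * p, hp⟩
      - (LmatGen ℓ η cm cp a (x - η) z * AmatGen ℓ a x z) 0 ⟨2 * p, hp⟩
      = z⁻¹ ^ 2 * a p x * commCoeff ℓ η cm cp a 0 x
        + if p = 0 then commCoeff ℓ η cm cp a (ℓ + 1) x / a ℓ (x + η) else 0 := by
  rw [LmatGen_sub_mul_AmatGen η cm cp hz (ha x), LmatGen_eq_of η cm cp hz (ha (x + η)),
    AmatGen_eq_of, AmatGen_eq_of]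
  simp only [Matrix.add_apply, Matrix.diagonal_mul, Matrix.diagonal_apply,
    Matrix.of_mul_of_apply_eq_sum_range, Fin.val_zero]
  rw [sum_amatEntry_zero_mul, sum_amatEntry_zero_mul]
  simp only [lmatEntry, mul_add, sum_add_distrib, ← mul_assoc]
  rw [sum_mul_amatEntry_two_mul_even, sum_mul_amatEntry_two_mul_even,
    sum_mul_amatInvEntry_two_mul_even, commCoeff_zero, commCoeff_add_one_self]
  by_cases hp0 : p = 0
  · subst hp0
    have ha' : a ℓ (x + η) ≠ 0 := ha _
    simp
    field_simp
    ring
  · simp [hp0, Fin.ext_iff]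
    ring

lemma lax_defect_zero_odd (hz : z ≠ 0) (ha : ∀ y, a ℓ y ≠ 0) {p : ℕ}
    (hp : 2 * p + 1 < 2 * ℓ + 1) :
    (AmatGen ℓ a x z * LmatGen ℓ η cm cp a x z) 0 ⟨2 * p + 1, hp⟩
      - (LmatGen ℓ η cm cp a (x - η) z * AmatGen ℓ a x z) 0 ⟨2 * p + 1, hp⟩
      = z⁻¹ * (commCoeff ℓ η cm cp a (p + 1) x
          - a p (x + η) / a ℓ (x + η) * commCoeff ℓ η cm cp a (ℓ + 1) x) := by
  have hpl : p < ℓ := by omega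
  rw [LmatGen_sub_mul_AmatGen η cm cp hz (ha x), LmatGen_eq_of η cm cp hz (ha (x + η)),
    AmatGen_eq_of, AmatGen_eq_of]
  simp only [Matrix.add_apply, Matrix.diagonal_mul, Matrix.diagonal_apply,
    Matrix.of_mul_of_apply_eq_sum_range, Fin.val_zero]
  rw [sum_amatEntry_zero_mul, sum_amatEntry_zero_mul]
  simp only [lmatEntry, mul_add, sum_add_distrib, ← mul_assoc]
  rw [sum_mul_amatEntry_two_mul_odd _ hpl, sum_mul_amatEntry_two_mul_odd _ hpl,
    sum_mul_amatInvEntry_two_mul_odd _ hpl, commCoeff_succ hpl, commCoeff_add_one_self]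
  have ha' : a ℓ (x + η) ≠ 0 := ha _
  simp [Fin.ext_iff]
  field_simp
  ring_nf

theorem lax_iff_row_zero (hz : z ≠ 0) (ha : ∀ y, a ℓ y ≠ 0) :
    LmatGen ℓ η cm cp a (x - η) z * AmatGen ℓ a x z = AmatGen ℓ a x z * LmatGen ℓ η cm cp a x z
      ↔ ∀ j, (AmatGen ℓ a x z * LmatGen ℓ η cm cp a x z) 0 j
          - (LmatGen ℓ η cm cp a (x - η) z * AmatGen ℓ a x z) 0 j = 0 := by
  refine ⟨fun h j => by rw [h, sub_self], fun h => ?_⟩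
  ext i j
  induction i using Fin.cases with
  | zero => exact (sub_eq_zero.mp (h j)).symm
  | succ i => exact LmatGen_sub_mul_AmatGen_apply_succ η cm cp x z hz ha i j

theorem forall_lax_iff_commCoeff_eq_zero (ha : ∀ y, a ℓ y ≠ 0) :
    (∀ z : ℂ, z ≠ 0 → ∀ x : ℂ,
        LmatGen ℓ η cm cp a (x - η) z * AmatGen ℓ a x z = AmatGen ℓ a x z * LmatGen ℓ η cm cp a x z)
      ↔ ∀ x, ∀ m < ℓ + 2, commCoeff ℓ η cm cp a m x = 0 := by
  constructor
  · intro hlax x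
    have hrow z (hz : z ≠ 0) := (lax_iff_row_zero η cm cp x z hz ha).mp (hlax z hz x)
    have heven z (hz : z ≠ 0) p hp :=
      (lax_defect_zero_even η cm cp x z hz ha hp).symm.trans (hrow z hz ⟨2 * p, hp⟩)
    have hodd z (hz : z ≠ 0) p hp :=
      (lax_defect_zero_odd η cm cp x z hz ha hp).symm.trans (hrow z hz ⟨2 * p + 1, hp⟩)
    have htop : commCoeff ℓ η cm cp a (ℓ + 1) x = 0 := by
      have h1 := heven 1 one_ne_zero 0 (by omega)
      have h2 := heven 2 two_ne_zero 0 (by omega)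
      simp only [if_true] at h1 h2
      have : commCoeff ℓ η cm cp a (ℓ + 1) x / a ℓ (x + η) = 0 := by
        linear_combination (4 * h2 - h1) / 3
      simpa [ha] using this
    have hzero : commCoeff ℓ η cm cp a 0 x = 0 := by
      simpa [htop, ha] using heven 1 one_ne_zero ℓ (by omega)
    intro m hm
    obtain _ | p := m
    · exact hzero
    obtain hp | rfl : p < ℓ ∨ p = ℓ := by omega
    · simpa [htop] using hodd 1 one_ne_zero p (by omega)
    · exact htop
  · intro hcoeff z hz x
    rw [lax_iff_row_zero η cm cp x z hz ha]
    rintro ⟨j, hj⟩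
    obtain ⟨p, rfl | rfl⟩ := Nat.even_or_odd' j
    · rw [lax_defect_zero_even η cm cp x z hz ha,
        hcoeff x 0 (by omega), hcoeff x (ℓ + 1) (by omega)]
      simp
    · rw [lax_defect_zero_odd η cm cp x z hz ha,
        hcoeff x (p + 1) (by omega), hcoeff x (ℓ + 1) (by omega)]
      simp

end Lax

/-- Lemma 4.1: commutativity of the scalar difference operators
L and A is equivalent to the matrix Lax equation
L(x−η,z)·A(x,z) = A(x,z)·L(x,z) for all z ≠ 0 and all x. -/
theorem scalar_commutativity_iff_lax
    (ℓ : ℕ) (η : ℂ) (cm cp : ℂ → ℂ) (a : ℕ → ℂ → ℂ)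
    (ha : ∀ x : ℂ, a ℓ x ≠ 0) :
    (∀ f : ℂ → ℂ, ∀ x : ℂ,
        cm x * (∑ k ∈ Finset.range (ℓ + 1), a k (x + η) * f (x + η + (2*(k : ℂ) + 1)*η))
          + cp x * (∑ k ∈ Finset.range (ℓ + 1), a k (x - η) * f (x - η + (2*(k : ℂ) + 1)*η))
        = ∑ k ∈ Finset.range (ℓ + 1), a k x *
            (cm (x + (2*(k : ℂ) + 1)*η) * f (x + (2*(k : ℂ) + 1)*η + η)
              + cp (x + (2*(k : ℂ) + 1)*η) * f (x + (2*(k : ℂ) + 1)*η - η)))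
    ↔ (∀ z : ℂ, z ≠ 0 → ∀ x : ℂ,
        LmatGen ℓ η cm cp a (x - η) z * AmatGen ℓ a x z
          = AmatGen ℓ a x z * LmatGen ℓ η cm cp a x z) :=
  (diffOp_comm_iff_commCoeff_eq_zero ℓ η cm cp a).trans
    (forall_lax_iff_commCoeff_eq_zero η cm cp ha).symm
end

section
/- Let ℓ be a positive integer, τ ∈ ℂ with Im τ > 0, η ∈ ℂ, and let M be a positive integer. Suppose v : ℂ×ℂ → ℂ satisfies θ1(2y)·[θ1(2x−2ℓη)v(x+η,y) + θ1(2x+2ℓη)v(x−η,y)] = θ1(2x)·[θ1(2y−2ℓη)v(x,y+η) + θ1(2y+2ℓη)v(x,y−η)] for all x,y ∈ ℂ, and that v(x, x+jη) = 0 for all x ∈ ℂ whenever j ∈ ℤ with |j| > M. Define V_j(x) = v(x, x+jη) / ∏_{k=1}^{ℓ} [θ1(2x+2(j−k)η)·θ1(2x+2(j+k)η)] and (Vf)(x) = Σ_{j=−M}^{M} V_j(x) f(x+jη). Then for every f : ℂ → ℂ and every x ∈ ℂ at which all theta-denominators occurring on both sides are nonzero, (L(Vf))(x) = (V(Lf))(x),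 where (Lg)(x) = [θ1(2x−2ℓη)g(x+η) + θ1(2x+2ℓη)g(x−η)]/θ1(2x). -/
open Complex Finset

/-- The coefficient V_j(x) = v(x, x+jη) / ∏_{k=1}^ℓ [θ₁(2x+2(j−k)η)·θ₁(2x+2(j+k)η)]. -/
noncomputable def Vcoef (τ η : ℂ) (ℓ : ℕ) (v : ℂ → ℂ → ℂ) (j : ℤ) (x : ℂ) : ℂ :=
  v x (x + (j : ℂ)*η) /
    ∏ k ∈ Finset.Icc 1 ℓ,
      (theta1 τ (2*x + 2*((j : ℂ) - (k : ℂ))*η) * theta1 τ (2*x + 2*((j : ℂ) + (k : ℂ))*η))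

/-- All theta-denominators occurring in the coefficients V_j at x are nonzero. -/
def domVcoef (τ η : ℂ) (ℓ : ℕ) (M : ℕ) (x : ℂ) : Prop :=
  ∀ j ∈ Finset.Icc (-(M : ℤ)) (M : ℤ), ∀ k ∈ Finset.Icc 1 ℓ,
    theta1 τ (2*x + 2*((j : ℂ) - (k : ℂ))*η) ≠ 0 ∧
    theta1 τ (2*x + 2*((j : ℂ) + (k : ℂ))*η) ≠ 0

/-!
Restrict everything to the lattice `x + ηℤ`: put `t n = θ₁(2x + 2nη)`, `u m n = v(x + mη, x + nη)`
and `P n = ∏_{k=1}^{ℓ} t(n-k) t(n+k)`, so that `V_j(x + mη) = u m (m+j) / P(m+j)`. Both sides of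
`L(Vf) = V(Lf)` at `x` are then finite sums over `n` of multiples of `f(x + nη)`. On the left the
coefficient is `(t(-ℓ) u 1 n + t(ℓ) u (-1) n) / (t 0 P n)`, which by `∇v = 0` at `(x, x + nη)`
equals `(t(n-ℓ) u 0 (n+1) + t(n+ℓ) u 0 (n-1)) / (t n P n)`. The telescoping identity
`t n P n t(n+1+ℓ) = t(n+1) P(n+1) t(n-ℓ)` turns these two terms into the coefficients of `V(Lf)`.
Finite support of `v` confines the theta values that must not vanish to `|n| ≤ M + 1`.
-/

theorem summable_of_eq_zero_of_lt_abs {α : Type*} [AddCommMonoid α] [TopologicalSpace α]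
    {g : ℤ → α} {c : ℤ} {N : ℕ}
    (h : ∀ n, (N : ℤ) < |n - c| → g n = 0) : Summable g :=
  summable_of_ne_finset_zero (s := Icc (c - N) (c + N)) fun n hn =>
    h n (by rw [mem_Icc] at hn; rw [lt_abs]; omega)

noncomputable def pairProd (t : ℤ → ℂ) (ℓ : ℕ) (n : ℤ) : ℂ :=
  ∏ k ∈ Icc 1 ℓ, t (n - k) * t (n + k)

/- With `t n = θ₁(2x + 2nη)`, `u m n = v(x + mη, x + nη)` and `g n = f(x + nη)`, these are the
operators `L` and `V` restricted to the lattice `x + ηℤ`. -/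
noncomputable def latticeL (t : ℤ → ℂ) (ℓ : ℕ) (g : ℤ → ℂ) (n : ℤ) : ℂ :=
  (t (n - ℓ) * g (n + 1) + t (n + ℓ) * g (n - 1)) / t n

noncomputable def latticeV (t : ℤ → ℂ) (ℓ M : ℕ) (u : ℤ → ℤ → ℂ) (g : ℤ → ℂ) (n : ℤ) : ℂ :=
  ∑ j ∈ Icc (-(M : ℤ)) M, u n (n + j) / pairProd t ℓ (n + j) * g (n + j)

-- Both sides equal `∏_{k=-ℓ}^{ℓ+1} t (n + k)`.
theorem mul_pairProd_mul (t : ℤ → ℂ) (ℓ : ℕ) (n : ℤ) :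
    t n * pairProd t ℓ n * t (n + 1 + ℓ) = t (n + 1) * pairProd t ℓ (n + 1) * t (n - ℓ) := by
  induction ℓ with
  | zero => simp [pairProd]; ring
  | succ ℓ ih =>
    simp only [pairProd, prod_Icc_succ_top (Nat.le_add_left 1 ℓ)] at ih ⊢
    push_cast
    rw [show n + (ℓ + 1) = n + 1 + ℓ by ring, show n + 1 - (ℓ + 1) = n - ℓ by ring]
    linear_combination t (n - (ℓ + 1)) * t (n + 1 + (ℓ + 1)) * ih

section Lattice

variable {t : ℤ → ℂ} {ℓ : ℕ}

theorem mul_div_mul_pairProd_succ {n : ℤ} {d : ℂ}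
    (h : d = 0 ∨ t n * pairProd t ℓ n ≠ 0 ∧ t (n + 1) * pairProd t ℓ (n + 1) ≠ 0) :
    d * t (n - ℓ) / (t n * pairProd t ℓ n)
      = d * t (n + 1 + ℓ) / (t (n + 1) * pairProd t ℓ (n + 1)) := by
  obtain rfl | ⟨h₀, h₁⟩ := h
  · simp
  rw [div_eq_div_iff h₀ h₁]
  linear_combination d * (mul_pairProd_mul t ℓ n).symm

variable {M : ℕ} {u : ℤ → ℤ → ℂ}

theorem latticeV_eq_tsum (g : ℤ → ℂ) {m : ℤ} (hsupp : ∀ n, (M : ℤ) < |n - m| → u m n = 0) :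
    latticeV t ℓ M u g m = ∑' n, u m n / pairProd t ℓ n * g n := by
  rw [latticeV, ← (Equiv.addLeft m).tsum_eq, tsum_eq_sum (s := Icc (-(M : ℤ)) M) fun j hj => ?_]
  · rfl
  · rw [mem_Icc] at hj
    rw [Equiv.coe_addLeft, hsupp _ (by rw [add_sub_cancel_left, lt_abs]; omega)]
    simp

theorem latticeL_latticeV_coeff {m n : ℤ}
    (hv : t n * (t (m - ℓ) * u (m + 1) n + t (m + ℓ) * u (m - 1) n)
      = t m * (t (n - ℓ) * u m (n + 1) + t (n + ℓ) * u m (n - 1)))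
    (hsupp : ∀ i k, (M : ℤ) < |k - i| → u i k = 0)
    (hW : ∀ k, |k - m| ≤ M + 1 → t k * pairProd t ℓ k ≠ 0) :
    (t (m - ℓ) * u (m + 1) n + t (m + ℓ) * u (m - 1) n) / (t m * pairProd t ℓ n)
      = u m (n - 1) * t (n - 1 - ℓ) / (t (n - 1) * pairProd t ℓ (n - 1))
        + u m (n + 1) * t (n + 1 + ℓ) / (t (n + 1) * pairProd t ℓ (n + 1)) := by
  by_cases hn : |n - m| ≤ M + 1
  swap
  · rw [not_le, lt_abs] at hn
    simp only [hsupp (m + 1) n (by rw [lt_abs]; omega), hsupp (m - 1) n (by rw [lt_abs]; omega),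
      hsupp m (n + 1) (by rw [lt_abs]; omega), hsupp m (n - 1) (by rw [lt_abs]; omega)]
    simp
  have hWn := hW n hn
  have hWm := hW m (by rw [sub_self, abs_zero]; omega)
  have hvanish : ∀ k, u m k = 0 ∨ t k * pairProd t ℓ k ≠ 0 := fun k =>
    if hk : |k - m| ≤ M + 1 then .inr (hW k hk) else .inl (hsupp m k (by rw [not_le] at hk; omega))
  have hfwd := mul_div_mul_pairProd_succ ((hvanish (n + 1)).imp_right fun h => ⟨hWn, h⟩)
  have hbwd := mul_div_mul_pairProd_succ (n := n - 1)
    ((hvanish (n - 1)).imp_right fun h => ⟨h, by rwa [sub_add_cancel]⟩)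
  rw [sub_add_cancel] at hbwd
  rw [← hfwd, hbwd, ← add_div, div_eq_div_iff (mul_ne_zero (left_ne_zero_of_mul hWm)
    (right_ne_zero_of_mul hWn)) hWn]
  linear_combination pairProd t ℓ n * hv

theorem latticeL_latticeV_comm (g : ℤ → ℂ) {m : ℤ}
    (hv : ∀ n, t n * (t (m - ℓ) * u (m + 1) n + t (m + ℓ) * u (m - 1) n)
      = t m * (t (n - ℓ) * u m (n + 1) + t (n + ℓ) * u m (n - 1)))
    (hsupp : ∀ i k, (M : ℤ) < |k - i| → u i k = 0)
    (hW : ∀ k, |k - m| ≤ M + 1 → t k * pairProd t ℓ k ≠ 0) :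
    latticeL t ℓ (latticeV t ℓ M u g) m = latticeV t ℓ M u (latticeL t ℓ g) m := by
  have hs : ∀ i c (s : ℤ → ℂ), (∀ n, u i (n + c) = 0 → s n = 0) → Summable s :=
    fun i c s hzero => summable_of_eq_zero_of_lt_abs (c := i - c) (N := M) fun n hn =>
      hzero n (hsupp i _ (by rwa [← sub_sub_eq_add_sub]))
  have hleft : latticeL t ℓ (latticeV t ℓ M u g) m = ∑' n,
      (t (m - ℓ) * u (m + 1) n + t (m + ℓ) * u (m - 1) n) / (t m * pairProd t ℓ n) * g n := by
    rw [latticeL, latticeV_eq_tsum g (hsupp _), latticeV_eq_tsum g (hsupp _), ← tsum_mul_left,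
      ← tsum_mul_left, ← (hs (m + 1) 0 _ fun n h => by simp_all).tsum_add
        (hs (m - 1) 0 _ fun n h => by simp_all), ← tsum_div_const]
    congr 1 with n
    ring
  have hup := (Equiv.addRight (1 : ℤ)).tsum_eq fun n =>
    u m (n - 1) * t (n - 1 - ℓ) / (t (n - 1) * pairProd t ℓ (n - 1)) * g n
  have hdown := (Equiv.subRight (1 : ℤ)).tsum_eq fun n =>
    u m (n + 1) * t (n + 1 + ℓ) / (t (n + 1) * pairProd t ℓ (n + 1)) * g n
  simp only [Equiv.coe_addRight, Equiv.subRight_apply, add_sub_cancel_right, sub_add_cancel]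
    at hup hdown
  have hright : latticeV t ℓ M u (latticeL t ℓ g) m = ∑' n,
      (u m (n - 1) * t (n - 1 - ℓ) / (t (n - 1) * pairProd t ℓ (n - 1))
        + u m (n + 1) * t (n + 1 + ℓ) / (t (n + 1) * pairProd t ℓ (n + 1))) * g n := by
    simp only [add_mul]
    rw [(hs m (-1) _ fun n h => by rw [← sub_eq_add_neg] at h; simp [h]).tsum_add
        (hs m 1 _ fun n h => by simp [h]),
      ← hup, ← hdown, ← (hs m 0 _ fun n h => by simp_all).tsum_add
        (hs m 0 _ fun n h => by simp_all), latticeV_eq_tsum _ (hsupp m)]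
    congr 1 with n
    rw [latticeL]
    ring
  rw [hleft, hright]
  exact tsum_congr fun n => congrArg (· * g n) (latticeL_latticeV_coeff (hv n) hsupp hW)

end Lattice

noncomputable def latticeTheta (τ η x : ℂ) (n : ℤ) : ℂ := theta1 τ (2 * x + 2 * n * η)

section Theta

variable {τ η x y : ℂ} {ℓ M : ℕ}

theorem prod_theta1_eq_pairProd {i : ℤ} (hy : y = x + i * η) (j : ℤ) :
    ∏ k ∈ Icc 1 ℓ,
        theta1 τ (2 * y + 2 * ((j : ℂ) - k) * η) * theta1 τ (2 * y + 2 * ((j : ℂ) + k) * η)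
      = pairProd (latticeTheta τ η x) ℓ (i + j) := by
  subst hy
  refine prod_congr rfl fun k _ => ?_
  simp only [latticeTheta]
  push_cast
  ring_nf

theorem pairProd_ne_zero_of_domVcoef {i : ℤ} (hy : y = x + i * η) (hdom : domVcoef τ η ℓ M y)
    {j : ℤ} (hj : j ∈ Icc (-(M : ℤ)) M) : pairProd (latticeTheta τ η x) ℓ (i + j) ≠ 0 := by
  rw [← prod_theta1_eq_pairProd hy, prod_ne_zero_iff]
  exact fun k hk => mul_ne_zero (hdom j hj k hk).1 (hdom j hj k hk).2

theorem sum_Vcoef_eq_latticeV (v : ℂ → ℂ → ℂ) (g : ℂ → ℂ) {i : ℤ} (hy : y = x + i * η) :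
    ∑ j ∈ Icc (-(M : ℤ)) M, Vcoef τ η ℓ v j y * g (y + j * η)
      = latticeV (latticeTheta τ η x) ℓ M (fun i n => v (x + i * η) (x + n * η))
          (fun n => g (x + n * η)) i := by
  refine sum_congr rfl fun j _ => ?_
  rw [Vcoef, prod_theta1_eq_pairProd hy, hy]
  push_cast
  ring_nf

theorem latticeTheta_mul_pairProd_ne_zero (hℓ : 0 < ℓ)
    (hθ : ∀ j ∈ Icc (-(M : ℤ)) M, theta1 τ (2 * (x + j * η)) ≠ 0) (hzero : domVcoef τ η ℓ M x)
    (hplus : domVcoef τ η ℓ M (x + η)) (hminus : domVcoef τ η ℓ M (x - η)) {n : ℤ}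
    (hn : |n| ≤ M + 1) :
    latticeTheta τ η x n * pairProd (latticeTheta τ η x) ℓ n ≠ 0 := by
  have h1 : 1 ∈ Icc 1 ℓ := mem_Icc.mpr ⟨le_rfl, hℓ⟩
  have hM : (M : ℤ) ∈ Icc (-(M : ℤ)) M := mem_Icc.mpr ⟨by omega, le_rfl⟩
  have hM' : -(M : ℤ) ∈ Icc (-(M : ℤ)) M := mem_Icc.mpr ⟨le_rfl, by omega⟩
  rw [abs_le] at hn
  obtain rfl | hn | rfl : n = -(M + 1) ∨ n ∈ Icc (-(M : ℤ)) M ∨ n = M + 1 := by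
    rw [mem_Icc]; omega
  · refine mul_ne_zero ?_ ?_
    · convert (hzero _ hM' 1 h1).1 using 2
      rw [latticeTheta]; congr 1; push_cast; ring
    · convert pairProd_ne_zero_of_domVcoef (i := -1) (by push_cast; ring) hminus hM' using 2
      ring
  · refine mul_ne_zero ?_ (by simpa using pairProd_ne_zero_of_domVcoef (i := 0) (by simp) hzero hn)
    convert hθ n hn using 2
    rw [latticeTheta]; congr 1; ring
  · refine mul_ne_zero ?_ ?_
    · convert (hzero _ hM 1 h1).2 using 2
      rw [latticeTheta]; congr 1; push_cast; ring
    · convert pairProd_ne_zero_of_domVcoef (i := 1) (by push_cast; ring) hplus hM using 2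
      ring

end Theta

theorem Novikov_solution_gives_commuting_operator_general
    (τ : ℂ) (ℓ : ℕ) (hℓ : 0 < ℓ) (η : ℂ) (M : ℕ)
    (v : ℂ → ℂ → ℂ)
    (hv : ∀ x y : ℂ,
      theta1 τ (2*y) * (theta1 τ (2*x - 2*(ℓ : ℂ)*η) * v (x + η) y
          + theta1 τ (2*x + 2*(ℓ : ℂ)*η) * v (x - η) y)
        = theta1 τ (2*x) * (theta1 τ (2*y - 2*(ℓ : ℂ)*η) * v x (y + η)
          + theta1 τ (2*y + 2*(ℓ : ℂ)*η) * v x (y - η)))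
    (hsupp : ∀ j : ℤ, (M : ℤ) < |j| → ∀ x : ℂ, v x (x + (j : ℂ)*η) = 0) :
    ∀ f : ℂ → ℂ, ∀ x : ℂ,
      theta1 τ (2*x) ≠ 0 →
      domVcoef τ η ℓ M (x + η) → domVcoef τ η ℓ M (x - η) → domVcoef τ η ℓ M x →
      (∀ j ∈ Finset.Icc (-(M : ℤ)) (M : ℤ), theta1 τ (2*(x + (j : ℂ)*η)) ≠ 0) →
      (theta1 τ (2*x - 2*(ℓ : ℂ)*η) *
          (∑ j ∈ Finset.Icc (-(M : ℤ)) (M : ℤ),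
            Vcoef τ η ℓ v j (x + η) * f (x + η + (j : ℂ)*η))
        + theta1 τ (2*x + 2*(ℓ : ℂ)*η) *
          (∑ j ∈ Finset.Icc (-(M : ℤ)) (M : ℤ),
            Vcoef τ η ℓ v j (x - η) * f (x - η + (j : ℂ)*η))) / theta1 τ (2*x)
      = ∑ j ∈ Finset.Icc (-(M : ℤ)) (M : ℤ), Vcoef τ η ℓ v j x *
          ((theta1 τ (2*(x + (j : ℂ)*η) - 2*(ℓ : ℂ)*η) * f (x + (j : ℂ)*η + η)
            + theta1 τ (2*(x + (j : ℂ)*η) + 2*(ℓ : ℂ)*η) * f (x + (j : ℂ)*η - η))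
            / theta1 τ (2*(x + (j : ℂ)*η))) := by
  intro f x _ hplus hminus hzero hθ
  have hcomm := latticeL_latticeV_comm (t := latticeTheta τ η x) (ℓ := ℓ) (M := M)
    (u := fun i n => v (x + i * η) (x + n * η)) (fun n => f (x + n * η)) (m := 0)
    (fun n => by
      have h := hv x (x + n * η)
      simp only [latticeTheta]; push_cast; ring_nf at h ⊢; exact h)
    (fun i k hk => by
      have h := hsupp (k - i) hk (x + i * η)
      push_cast at h ⊢; ring_nf at h ⊢; exact h)
    (fun k hk => latticeTheta_mul_pairProd_ne_zero hℓ hθ hzero hplus hminus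
      (by rwa [sub_zero] at hk))
  calc _ = latticeL (latticeTheta τ η x) ℓ (latticeV (latticeTheta τ η x) ℓ M
          (fun i n => v (x + i * η) (x + n * η)) (fun n => f (x + n * η))) 0 := by
        simp only [latticeL, zero_add, zero_sub]
        rw [← sum_Vcoef_eq_latticeV v f (x := x) (y := x + η) (i := 1) (by push_cast; ring),
          ← sum_Vcoef_eq_latticeV v f (x := x) (y := x - η) (i := -1) (by push_cast; ring)]
        simp only [latticeTheta]; push_cast; ring_nf
    _ = _ := hcomm
    _ = _ := by
        rw [sum_Vcoef_eq_latticeV v (fun y => (theta1 τ (2 * y - 2 * ℓ * η) * f (y + η)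
          + theta1 τ (2 * y + 2 * ℓ * η) * f (y - η)) / theta1 τ (2 * y))
          (x := x) (y := x) (i := 0) (by simp)]
        congr 1 with n
        simp only [latticeL, latticeTheta]; push_cast; ring_nf

/-- a finitely supported solution v of ∇v = 0 produces a difference
operator V = Σ_j V_j(x) e^{jη∂_x} commuting with the difference Lamé operator L. -/
theorem Novikov_solution_gives_commuting_operator
    (τ : ℂ) (hτ : 0 < τ.im) (ℓ : ℕ) (hℓ : 0 < ℓ) (η : ℂ) (M : ℕ) (hM : 0 < M)
    (v : ℂ → ℂ → ℂ)
    (hv : ∀ x y : ℂ,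
      theta1 τ (2*y) * (theta1 τ (2*x - 2*(ℓ : ℂ)*η) * v (x + η) y
          + theta1 τ (2*x + 2*(ℓ : ℂ)*η) * v (x - η) y)
        = theta1 τ (2*x) * (theta1 τ (2*y - 2*(ℓ : ℂ)*η) * v x (y + η)
          + theta1 τ (2*y + 2*(ℓ : ℂ)*η) * v x (y - η)))
    (hsupp : ∀ j : ℤ, (M : ℤ) < |j| → ∀ x : ℂ, v x (x + (j : ℂ)*η) = 0) :
    ∀ f : ℂ → ℂ, ∀ x : ℂ,
      theta1 τ (2*x) ≠ 0 →
      domVcoef τ η ℓ M (x + η) → domVcoef τ η ℓ M (x - η) → domVcoef τ η ℓ M x →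
      (∀ j ∈ Finset.Icc (-(M : ℤ)) (M : ℤ), theta1 τ (2*(x + (j : ℂ)*η)) ≠ 0) →
      (theta1 τ (2*x - 2*(ℓ : ℂ)*η) *
          (∑ j ∈ Finset.Icc (-(M : ℤ)) (M : ℤ),
            Vcoef τ η ℓ v j (x + η) * f (x + η + (j : ℂ)*η))
        + theta1 τ (2*x + 2*(ℓ : ℂ)*η) *
          (∑ j ∈ Finset.Icc (-(M : ℤ)) (M : ℤ),
            Vcoef τ η ℓ v j (x - η) * f (x - η + (j : ℂ)*η))) / theta1 τ (2*x)
      = ∑ j ∈ Finset.Icc (-(M : ℤ)) (M : ℤ), Vcoef τ η ℓ v j x *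
          ((theta1 τ (2*(x + (j : ℂ)*η) - 2*(ℓ : ℂ)*η) * f (x + (j : ℂ)*η + η)
            + theta1 τ (2*(x + (j : ℂ)*η) + 2*(ℓ : ℂ)*η) * f (x + (j : ℂ)*η - η))
            / theta1 τ (2*(x + (j : ℂ)*η))) :=
  Novikov_solution_gives_commuting_operator_general τ ℓ hℓ η M v hv hsupp
end

section
/- Let ℓ be a positive integer, τ ∈ ℂ with Im τ > 0, η ∈ ℂ with θ1(2nη) ≠ 0 for all integers 1 ≤ n ≤ 2ℓ, and let m be an integer with 1 ≤ m ≤ ℓ. Then the operators A_{mη} and A_{−mη} coincide: for every function f : ℂ → ℂ and every x ∈ ℂ at which all theta-denominators occurring in the coefficients A_k(x,mη) and A_k(x,−mη) are nonzero, Σ_{k=0}^{ℓ} A_k(x,mη)·f(x+(2k−ℓ+m)η) = Σ_{k=0}^{ℓ} A_k(x,−mη)·f(x+(2k−ℓ−m)η). -/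
/-! At λ = μη with μ ∈ ℤ, the λ-dependent thetas in A_k(x, λ) are elliptic numbers [n], so
A_k(x, μη) splits into a constant times a quotient of products of θ₁(2x + 2tη) over integer
intervals of t. For λ = mη the factor θ₁(2λ − 2(ℓ − j)η) at j = ℓ − m kills every coefficient with
k > ℓ − m; for λ = −mη the factor θ₁(2λ + 2(ℓ − j)η) kills every coefficient with k < m. The
surviving coefficients match, A_k(x, mη) = A_{k+m}(x, −mη): the interval products on the two sides
differ by blocks of length m that cancel between numerator and denominator, and the constants are
the same ratio of elliptic factorials once the oddness of θ₁ is used on negative arguments. The two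
operators then shift f by the same amounts (2k − ℓ + m)η. -/

open Complex Finset

lemma en_zero (τ η : ℂ) : en τ η 0 = 0 := by
  simp [en, theta1_zero]

section ascProd

variable {M : Type*}

def ascProd [CommMonoid M] (g : ℤ → M) (a : ℤ) (n : ℕ) : M := ∏ j ∈ range n, g (a + j)

lemma ascProd_split [CommMonoid M] (g : ℤ → M) {a b : ℤ} {n p q : ℕ}
    (hq : n + p = q) (hb : a + n = b) :
    ascProd g a q = ascProd g a n * ascProd g b p := by
  subst hq hb
  simp only [ascProd, prod_range_add, Nat.cast_add, add_assoc]

lemma ascProd_eq_prod_range_rev [CommMonoid M] (g : ℤ → M) (a : ℤ) (n : ℕ) :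
    ascProd g a n = ∏ j ∈ range n, g (a + n - 1 - j) := by
  rw [ascProd, ← prod_range_reflect]
  refine prod_congr rfl fun j hj => ?_
  rw [mem_range] at hj
  congr 1
  omega

lemma ascProd_eq_zero [CommMonoidWithZero M] {g : ℤ → M} (hg : g 0 = 0) {a : ℤ} {n : ℕ}
    (ha : a ≤ 0) (hn : 0 < a + n) : ascProd g a n = 0 :=
  prod_eq_zero (i := (-a).toNat) (mem_range.2 (by omega)) (by rw [← hg]; congr 1; omega)

lemma ascProd_neg [CommRing M] {g : ℤ → M} (hg : ∀ t, g (-t) = -g t) (b : ℤ) (n : ℕ) :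
    ascProd g (-b) n = (-1) ^ n * ascProd g (b - n + 1) n := by
  have hsign : (-1 : M) ^ n = (-1) ^ #(range n) := by rw [card_range]
  rw [ascProd_eq_prod_range_rev g (b - n + 1), hsign, ← prod_neg, ascProd]
  refine prod_congr rfl fun j _ => ?_
  rw [← hg]
  congr 1
  ring

end ascProd

section Factorization

variable (τ η : ℂ) (ℓ : ℕ)

lemma efact_mul_ascProd (a n : ℕ) :
    efact τ η a * ascProd (en τ η) (a + 1) n = efact τ η (a + n) := by
  rw [efact, efact, prod_range_add, ascProd]
  congr 1
  refine prod_congr rfl fun j _ => ?_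
  push_cast
  ring_nf

lemma efact_ne_zero (hη : ∀ n : ℕ, 1 ≤ n → n ≤ 2 * ℓ → theta1 τ (2 * (n : ℂ) * η) ≠ 0)
    {n : ℕ} (hn : n ≤ 2 * ℓ) : efact τ η n ≠ 0 :=
  prod_ne_zero_iff.2 fun j hj => by
    have := hη (j + 1) (by omega) (by rw [mem_range] at hj; omega)
    rwa [en, show (((j : ℤ) + 1 : ℤ) : ℂ) = ((j + 1 : ℕ) : ℂ) by push_cast; ring]

variable {τ η} in
lemma ascProd_en_eq_div {a n b : ℕ} {s : ℤ} (hs : s = a + 1) (hb : a + n = b)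
    (ha : efact τ η a ≠ 0) : ascProd (en τ η) s n = efact τ η b / efact τ η a := by
  subst hs hb
  rw [← efact_mul_ascProd, mul_div_cancel_left₀ _ ha]

noncomputable def thetaAt (x : ℂ) (t : ℤ) : ℂ := theta1 τ (2 * x + 2 * t * η)

noncomputable def AcoefConst (k : ℕ) (μ : ℤ) : ℂ :=
  (-1) ^ k * (efact τ η ℓ / efact τ η (2 * ℓ)) * ebinom τ η ℓ k *
    ascProd (en τ η) (μ + k + 1) (ℓ - k) * ascProd (en τ η) (μ - ℓ) k

noncomputable def AcoefX (k : ℕ) (x : ℂ) (μ : ℤ) : ℂ :=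
  ascProd (thetaAt τ η x) (k + 1) (ℓ - k) * ascProd (thetaAt τ η x) (-ℓ) k /
    (ascProd (thetaAt τ η x) (μ + 2 * k - ℓ + 1) (ℓ - k) *
      ascProd (thetaAt τ η x) (μ + k - ℓ) k)

lemma Acoef_intCast_mul {k : ℕ} (hk : k ≤ ℓ) (x : ℂ) (μ : ℤ) :
    Acoef τ η ℓ k x (μ * η) = AcoefConst τ η ℓ k μ * AcoefX τ η ℓ k x μ := by
  have hcast : ((ℓ - k : ℕ) : ℂ) = ℓ - k := by push_cast [hk]; ring
  have num₁ : ∏ j ∈ range (ℓ - k), theta1 τ (2 * x + 2 * ((ℓ : ℂ) - j) * η) =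
      ascProd (thetaAt τ η x) (k + 1) (ℓ - k) := by
    rw [ascProd_eq_prod_range_rev]
    refine prod_congr rfl fun j _ => ?_
    rw [thetaAt]; push_cast [hcast]; ring_nf
  have num₂ : ∏ j ∈ range (ℓ - k), theta1 τ (2 * (μ * η) + 2 * ((ℓ : ℂ) - j) * η) =
      ascProd (en τ η) (μ + k + 1) (ℓ - k) := by
    rw [ascProd_eq_prod_range_rev]
    refine prod_congr rfl fun j _ => ?_
    rw [en]; push_cast [hcast]; ring_nf
  have den₁ : ∏ j ∈ range (ℓ - k), theta1 τ (2 * x + 2 * (μ * η) + 2 * ((k : ℂ) - j) * η) =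
      ascProd (thetaAt τ η x) (μ + 2 * k - ℓ + 1) (ℓ - k) := by
    rw [ascProd_eq_prod_range_rev]
    refine prod_congr rfl fun j _ => ?_
    rw [thetaAt]; push_cast [hcast]; ring_nf
  have num₃ : ∏ j ∈ range k, theta1 τ (2 * x - 2 * ((ℓ : ℂ) - j) * η) =
      ascProd (thetaAt τ η x) (-ℓ) k :=
    prod_congr rfl fun j _ => by rw [thetaAt]; push_cast; ring_nf
  have num₄ : ∏ j ∈ range k, theta1 τ (2 * (μ * η) - 2 * ((ℓ : ℂ) - j) * η) =
      ascProd (en τ η) (μ - ℓ) k :=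
    prod_congr rfl fun j _ => by rw [en]; push_cast; ring_nf
  have den₂ : ∏ j ∈ range k, theta1 τ (2 * x + 2 * (μ * η) + 2 * ((k : ℂ) + j - ℓ) * η) =
      ascProd (thetaAt τ η x) (μ + k - ℓ) k :=
    prod_congr rfl fun j _ => by rw [thetaAt]; push_cast; ring_nf
  simp only [Acoef, prod_div_distrib, prod_mul_distrib, num₁, num₂, num₃, num₄, den₁, den₂,
    AcoefConst, AcoefX]
  ring

end Factorization

section Shift

variable {τ η : ℂ} {ℓ : ℕ}

lemma AcoefConst_shift (hη : ∀ n : ℕ, 1 ≤ n → n ≤ 2 * ℓ → theta1 τ (2 * (n : ℂ) * η) ≠ 0)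
    {k m : ℕ} (hkm : k + m ≤ ℓ) :
    AcoefConst τ η ℓ k m = AcoefConst τ η ℓ (k + m) (-m) := by
  have hne : ∀ {n}, n ≤ ℓ → efact τ η n ≠ 0 := fun hn => efact_ne_zero τ η ℓ hη (by omega)
  have e₁ : ascProd (en τ η) (m + k + 1) (ℓ - k) = efact τ η (ℓ + m) / efact τ η (k + m) :=
    ascProd_en_eq_div (by push_cast; ring) (by omega) (hne hkm)
  have e₂ : ascProd (en τ η) (m - ℓ) k =
      (-1) ^ k * (efact τ η (ℓ - m) / efact τ η (ℓ - (k + m))) := by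
    rw [show (m : ℤ) - ℓ = -(ℓ - m) by ring, ascProd_neg (en_neg τ η),
      ascProd_en_eq_div (a := ℓ - (k + m)) (b := ℓ - m) (by omega) (by omega) (hne (by omega))]
  have e₃ : ascProd (en τ η) (-m + (k + m : ℕ) + 1) (ℓ - (k + m)) =
      efact τ η (ℓ - m) / efact τ η k :=
    ascProd_en_eq_div (by push_cast; ring) (by omega) (hne (by omega))
  have e₄ : ascProd (en τ η) (-m - ℓ) (k + m) =
      (-1) ^ (k + m) * (efact τ η (ℓ + m) / efact τ η (ℓ - k)) := by
    rw [show -(m : ℤ) - ℓ = -(ℓ + m) by ring, ascProd_neg (en_neg τ η),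
      ascProd_en_eq_div (a := ℓ - k) (b := ℓ + m) (by omega) (by omega) (hne (by omega))]
  simp only [AcoefConst, ebinom, e₁, e₂, e₃, e₄]
  -- up to the signs (-1)^(2k) and (-1)^(2(k+m)) both sides are the same monomial in the factorials
  ring_nf
  simp only [pow_mul', neg_one_sq, one_pow, mul_one]

lemma AcoefX_den_ne_zero {x : ℂ} {μ : ℤ} {k : ℕ} (hk : k ≤ ℓ) (h : domAcoef τ η ℓ x (μ * η)) :
    ascProd (thetaAt τ η x) (μ + 2 * k - ℓ + 1) (ℓ - k) *
      ascProd (thetaAt τ η x) (μ + k - ℓ) k ≠ 0 := by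
  obtain ⟨h₁, h₂⟩ := h k (mem_range.2 (by omega))
  rw [ascProd_eq_prod_range_rev]
  refine mul_ne_zero (prod_ne_zero_iff.2 fun j hj => ?_) (prod_ne_zero_iff.2 fun j hj => ?_)
  · convert h₁ j hj using 2
    rw [thetaAt]; push_cast [hk]; ring_nf
  · convert h₂ j hj using 2
    rw [thetaAt]; push_cast; ring_nf

lemma AcoefX_shift {x : ℂ} {k m : ℕ} (hkm : k + m ≤ ℓ)
    (hL : domAcoef τ η ℓ x (m * η)) (hR : domAcoef τ η ℓ x (-(m * η))) :
    AcoefX τ η ℓ k x m = AcoefX τ η ℓ (k + m) x (-m) := by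
  have hdL := AcoefX_den_ne_zero (μ := m) (k := k) (by omega)
    (show domAcoef τ η ℓ x ((m : ℤ) * η) by simpa using hL)
  have hdR := AcoefX_den_ne_zero (μ := -m) (k := k + m) hkm
    (show domAcoef τ η ℓ x ((-m : ℤ) * η) by simpa using hR)
  unfold AcoefX
  set X := thetaAt τ η x
  -- the factors X(k+1) ⋯ X(k+m) and X(k-ℓ) ⋯ X(k+m-ℓ-1) move between numerator and denominator
  have s₁ : ascProd X (k + 1) (ℓ - k) =
      ascProd X (k + 1) m * ascProd X ((k + m : ℕ) + 1) (ℓ - (k + m)) :=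
    ascProd_split X (by omega) (by omega)
  have s₂ : ascProd X (m + 2 * k - ℓ + 1) (ℓ - k) =
      ascProd X (-m + 2 * (k + m : ℕ) - ℓ + 1) (ℓ - (k + m)) * ascProd X (k + 1) m := by
    rw [show (m : ℤ) + 2 * k - ℓ + 1 = -m + 2 * (k + m : ℕ) - ℓ + 1 by push_cast; ring]
    exact ascProd_split X (by omega) (by omega)
  have s₃ : ascProd X (-ℓ) (k + m) = ascProd X (-ℓ) k * ascProd X (-m + (k + m : ℕ) - ℓ) m :=
    ascProd_split X rfl (by omega)
  have s₄ : ascProd X (-m + (k + m : ℕ) - ℓ) (k + m) =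
      ascProd X (-m + (k + m : ℕ) - ℓ) m * ascProd X (m + k - ℓ) k :=
    ascProd_split X (add_comm m k) (by omega)
  rw [s₂] at hdL
  rw [s₄] at hdR
  rw [s₁, s₂, s₃, s₄, div_eq_div_iff hdL hdR]
  ring

end Shift

section Coefficients

variable {τ η : ℂ} {ℓ : ℕ} {x : ℂ}

lemma neg_natCast_mul_eq_intCast_mul (m : ℕ) : -((m : ℂ) * η) = ((-m : ℤ) : ℂ) * η := by
  push_cast; ring

lemma Acoef_natCast_mul_eq_zero {k m : ℕ} (hk : k ≤ ℓ) (hm : m ≤ ℓ) (hmk : ℓ < m + k) :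
    Acoef τ η ℓ k x (m * η) = 0 := by
  rw [← Int.cast_natCast, Acoef_intCast_mul τ η ℓ hk, AcoefConst,
    ascProd_eq_zero (en_zero τ η) (a := m - ℓ) (by omega) (by omega)]
  simp

lemma Acoef_neg_natCast_mul_eq_zero {k m : ℕ} (hm : m ≤ ℓ) (hkm : k < m) :
    Acoef τ η ℓ k x (-(m * η)) = 0 := by
  rw [neg_natCast_mul_eq_intCast_mul, Acoef_intCast_mul τ η ℓ (by omega), AcoefConst,
    ascProd_eq_zero (en_zero τ η) (a := -m + k + 1) (by omega) (by omega)]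
  simp

lemma Acoef_shift (hη : ∀ n : ℕ, 1 ≤ n → n ≤ 2 * ℓ → theta1 τ (2 * (n : ℂ) * η) ≠ 0)
    {k m : ℕ} (hkm : k + m ≤ ℓ)
    (hL : domAcoef τ η ℓ x (m * η)) (hR : domAcoef τ η ℓ x (-(m * η))) :
    Acoef τ η ℓ k x (m * η) = Acoef τ η ℓ (k + m) x (-(m * η)) := by
  rw [neg_natCast_mul_eq_intCast_mul, ← Int.cast_natCast, Acoef_intCast_mul τ η ℓ (by omega),
    Acoef_intCast_mul τ η ℓ hkm, AcoefConst_shift hη hkm, AcoefX_shift hkm hL hR]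

end Coefficients

theorem Aop_even_general
    (τ : ℂ) (ℓ : ℕ) (η : ℂ)
    (hη : ∀ n : ℕ, 1 ≤ n → n ≤ 2*ℓ → theta1 τ (2*(n : ℂ)*η) ≠ 0)
    (m : ℕ) (hm2 : m ≤ ℓ) :
    ∀ f : ℂ → ℂ, ∀ x : ℂ,
      domAcoef τ η ℓ x ((m : ℂ)*η) → domAcoef τ η ℓ x (-((m : ℂ)*η)) →
      ∑ k ∈ Finset.range (ℓ + 1),
          Acoef τ η ℓ k x ((m : ℂ)*η) * f (x + (2*(k : ℂ) - (ℓ : ℂ) + (m : ℂ))*η)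
        = ∑ k ∈ Finset.range (ℓ + 1),
            Acoef τ η ℓ k x (-((m : ℂ)*η)) * f (x + (2*(k : ℂ) - (ℓ : ℂ) - (m : ℂ))*η) := by
  intro f x hL hR
  have hsplit : ℓ + 1 = (ℓ + 1 - m) + m := by omega
  conv_lhs =>
    rw [hsplit, sum_range_add _ (ℓ + 1 - m) m, sum_eq_zero (s := range m) fun i hi => by
      rw [Acoef_natCast_mul_eq_zero (by rw [mem_range] at hi; omega) hm2 (by omega), zero_mul], add_zero]
  conv_rhs =>
    rw [hsplit, add_comm, sum_range_add _ m (ℓ + 1 - m), sum_eq_zero (s := range m) fun i hi => by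
      rw [Acoef_neg_natCast_mul_eq_zero hm2 (mem_range.1 hi), zero_mul], zero_add]
  refine sum_congr rfl fun k hk => ?_
  rw [Acoef_shift hη (by rw [mem_range] at hk; omega) hL hR, add_comm k m]
  congr 2
  push_cast
  ring

/-- for integer 1 ≤ m ≤ ℓ the operators A_{mη} and A_{−mη} coincide. -/
theorem Aop_even
    (τ : ℂ) (hτ : 0 < τ.im) (ℓ : ℕ) (hℓ : 0 < ℓ) (η : ℂ)
    (hη : ∀ n : ℕ, 1 ≤ n → n ≤ 2*ℓ → theta1 τ (2*(n : ℂ)*η) ≠ 0)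
    (m : ℕ) (hm1 : 1 ≤ m) (hm2 : m ≤ ℓ) :
    ∀ f : ℂ → ℂ, ∀ x : ℂ,
      domAcoef τ η ℓ x ((m : ℂ)*η) → domAcoef τ η ℓ x (-((m : ℂ)*η)) →
      ∑ k ∈ Finset.range (ℓ + 1),
          Acoef τ η ℓ k x ((m : ℂ)*η) * f (x + (2*(k : ℂ) - (ℓ : ℂ) + (m : ℂ))*η)
        = ∑ k ∈ Finset.range (ℓ + 1),
            Acoef τ η ℓ k x (-((m : ℂ)*η)) * f (x + (2*(k : ℂ) - (ℓ : ℂ) - (m : ℂ))*η) :=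
  Aop_even_general τ ℓ η hη m hm2
end
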